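/- arXiv:2005.12312 — 13 statements merged into one kernel-verified Lean document; each statement's English description precedes it below -/
import Mathlib

section
/- If ρ is a root of x^3 - a x^2 - (a+3)x - 1 for an integer a, then ρ is a unit in Z[ρ], and moreover (ρ'')^{-2} = 1 + 2ρ + ρ^2 where ρ'' denotes another root; in particular, the element 1 + 2ρ + ρ^2 is a unit in Z[ρ] and has norm 1. -/
theorem simplest_cubic_units (a : ℤ) (ρ : ℝ)
    (hρ : ρ^3 - a*ρ^2 - (a+3)*ρ - 1 = 0) :
    -- ρ is a unit in ℤ[ρ]
    ρ * (ρ^2 - a*ρ - (a+3)) = 1 ∧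
    -- (ρ'')⁻² = 1 + 2ρ + ρ² for another root ρ''
    (∃ ρ'' : ℝ, ρ''^3 - a*ρ''^2 - (a+3)*ρ'' - 1 = 0 ∧ ρ'' ≠ ρ ∧
      (ρ''⁻¹)^2 = 1 + 2*ρ + ρ^2) ∧
    -- 1 + 2ρ + ρ² has norm 1
    (∀ ρ' ρ'' : ℝ, ρ'^3 - a*ρ'^2 - (a+3)*ρ' - 1 = 0 →
      ρ''^3 - a*ρ''^2 - (a+3)*ρ'' - 1 = 0 → ρ' ≠ ρ → ρ'' ≠ ρ → ρ' ≠ ρ'' →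
      (1 + 2*ρ + ρ^2) * (1 + 2*ρ' + ρ'^2) * (1 + 2*ρ'' + ρ''^2) = 1) := by
  have hne : (1 : ℝ) + ρ ≠ 0 := by
    intro h
    have hρ1 : ρ = -1 := by linarith
    rw [hρ1] at hρ
    linarith
  refine ⟨by linear_combination hρ, ⟨-1/(1+ρ), ?_, ?_, ?_⟩, ?_⟩
  · field_simp
    linear_combination -hρ
  · intro h
    have : ρ^2 + ρ + 1 = 0 := by
      field_simp at h
      linarith [h]
    nlinarith [sq_nonneg (ρ + 1/2)]
  · field_simp
    ring
  · intro ρ' ρ'' hρ' hρ'' h1 h2 h3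
    have d1 : ρ - ρ' ≠ 0 := sub_ne_zero.mpr h1.symm
    have d2 : ρ - ρ'' ≠ 0 := sub_ne_zero.mpr h2.symm
    have d3 : ρ' - ρ'' ≠ 0 := sub_ne_zero.mpr h3
    have s1 : ρ^2 + ρ*ρ' + ρ'^2 - a*(ρ+ρ') - (a+3) = 0 := by
      apply mul_left_cancel₀ d1
      linear_combination hρ - hρ'
    have s2 : ρ^2 + ρ*ρ'' + ρ''^2 - a*(ρ+ρ'') - (a+3) = 0 := by
      apply mul_left_cancel₀ d2
      linear_combination hρ - hρ''
    have e1 : ρ + ρ' + ρ'' - a = 0 := by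
      apply mul_left_cancel₀ d3
      linear_combination s1 - s2
    have e2 : ρ*ρ' + ρ*ρ'' + ρ'*ρ'' + (a+3) = 0 := by
      linear_combination (ρ+ρ')*e1 - s1
    have e3 : ρ*ρ'*ρ'' - 1 = 0 := by
      linear_combination hρ - ρ^2*e1 + ρ*e2
    have hP : (1+ρ)*(1+ρ')*(1+ρ'') = -1 := by
      linear_combination e1 + e2 + e3
    linear_combination ((1+ρ)*(1+ρ')*(1+ρ'') - 1) * hP
end

section
/- Let ρ be the largest root of x^3 - a x^2 - (a+3)x - 1 with a ∈ Z, a ≥ -1. Then N(-v - wρ + (v+1)ρ^2) = a^2vW - av^2W - avW^2 + a^2v - 2av^2 + avW + aW^2 + v^3 - 3vW^2 - W^3 + 3av + 3aW - 3v^2 - 3vW - 3W^2 + 2a + 3, where W = w - v(a+2) - 1 and N denotes the field norm from Q(ρ) to Q. -/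
/-!
The three roots are pairwise distinct, so they are exactly the three conjugates and Vieta's
formulas give `ρ + ρ' + ρ'' = a`, `ρρ' + ρρ'' + ρ'ρ'' = -(a + 3)` and `ρρ'ρ'' = 1`. The norm of
`d + bρ + cρ²` is a symmetric polynomial in the conjugates, hence a polynomial in these
elementary symmetric functions; substituting them gives the stated formula.
-/

theorem vieta_of_cubic_roots {R : Type*} [CommRing R] [IsDomain R] {s t u x y z : R}
    (hx : x^3 - s*x^2 + t*x - u = 0) (hy : y^3 - s*y^2 + t*y - u = 0)
    (hz : z^3 - s*z^2 + t*z - u = 0) (hxy : x ≠ y) (hxz : x ≠ z) (hyz : y ≠ z) :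
    x + y + z = s ∧ x*y + x*z + y*z = t ∧ x*y*z = u := by
  have hxy' : x^2 + x*y + y^2 - s*(x + y) + t = 0 :=
    (mul_eq_zero.mp (by linear_combination hx - hy)).resolve_left (sub_ne_zero.mpr hxy)
  have hxz' : x^2 + x*z + z^2 - s*(x + z) + t = 0 :=
    (mul_eq_zero.mp (by linear_combination hx - hz)).resolve_left (sub_ne_zero.mpr hxz)
  have hs : x + y + z - s = 0 :=
    (mul_eq_zero.mp (by linear_combination hxy' - hxz')).resolve_left (sub_ne_zero.mpr hyz)
  have ht : x*y + x*z + y*z = t := by linear_combination (x + y) * hs - hxy'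
  refine ⟨by linear_combination hs, ht, ?_⟩
  linear_combination hx - x^2 * hs + x * ht

theorem prod_quadratic_eval_eq_symmetric {R : Type*} [CommRing R] {b c d s t u x y z : R}
    (hs : x + y + z = s) (ht : x*y + x*z + y*z = t) (hu : x*y*z = u) :
    (d + b*x + c*x^2) * (d + b*y + c*y^2) * (d + b*z + c*z^2)
      = d^3 + d^2*b*s + d^2*c*(s^2 - 2*t) + d*b^2*t + d*b*c*(s*t - 3*u)
        + d*c^2*(t^2 - 2*s*u) + b^3*u + b^2*c*s*u + b*c^2*t*u + c^3*u^2 := by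
  subst hs ht hu
  ring

theorem simplest_cubic_norm_triangle_general (a : ℤ) (ρ ρ' ρ'' : ℝ)
    (hρ : ρ^3 - a*ρ^2 - (a+3)*ρ - 1 = 0)
    (hρ' : ρ'^3 - a*ρ'^2 - (a+3)*ρ' - 1 = 0)
    (hρ'' : ρ''^3 - a*ρ''^2 - (a+3)*ρ'' - 1 = 0)
    (hlt1 : ρ' < ρ) (hlt2 : ρ'' < ρ) (hne : ρ' ≠ ρ'')
    (v w W : ℤ) (hW : W = w - v*(a+2) - 1) :
    (-(v:ℝ) - w*ρ + (v+1)*ρ^2) * (-(v:ℝ) - w*ρ' + (v+1)*ρ'^2) *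
      (-(v:ℝ) - w*ρ'' + (v+1)*ρ''^2)
    = ((a^2*v*W - a*v^2*W - a*v*W^2 + a^2*v - 2*a*v^2 + a*v*W + a*W^2 + v^3
        - 3*v*W^2 - W^3 + 3*a*v + 3*a*W - 3*v^2 - 3*v*W - 3*W^2 + 2*a + 3 : ℤ) : ℝ) := by
  obtain ⟨hs, ht, hu⟩ := vieta_of_cubic_roots (s := (a : ℝ)) (t := -(a + 3)) (u := 1)
    (by linear_combination hρ) (by linear_combination hρ') (by linear_combination hρ'')
    hlt1.ne' hlt2.ne' hne
  have hnorm := prod_quadratic_eval_eq_symmetric (d := -(v : ℝ)) (b := -(w : ℝ))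
    (c := (v : ℝ) + 1) hs ht hu
  subst hW
  push_cast
  linear_combination hnorm

theorem simplest_cubic_norm_triangle (a : ℤ) (ha : -1 ≤ a) (ρ ρ' ρ'' : ℝ)
    (hρ : ρ^3 - a*ρ^2 - (a+3)*ρ - 1 = 0)
    (hρ' : ρ'^3 - a*ρ'^2 - (a+3)*ρ' - 1 = 0)
    (hρ'' : ρ''^3 - a*ρ''^2 - (a+3)*ρ'' - 1 = 0)
    (hlt1 : ρ' < ρ) (hlt2 : ρ'' < ρ) (hne : ρ' ≠ ρ'')
    (v w W : ℤ) (hW : W = w - v*(a+2) - 1) :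
    (-(v:ℝ) - w*ρ + (v+1)*ρ^2) * (-(v:ℝ) - w*ρ' + (v+1)*ρ'^2) *
      (-(v:ℝ) - w*ρ'' + (v+1)*ρ''^2)
    = ((a^2*v*W - a*v^2*W - a*v*W^2 + a^2*v - 2*a*v^2 + a*v*W + a*W^2 + v^3
        - 3*v*W^2 - W^3 + 3*a*v + 3*a*W - 3*v^2 - 3*v*W - 3*W^2 + 2*a + 3 : ℤ) : ℝ) :=
  simplest_cubic_norm_triangle_general a ρ ρ' ρ'' hρ hρ' hρ'' hlt1 hlt2 hne v w W hW
end

section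
/- Let ρ be the largest root of x^3 - a x^2 - (a+3)x - 1 with a ∈ Z, a ≥ -1. Then N(1 + ρ + ρ^2) = a^2 + 3a + 9, i.e., the norm of 1+ρ+ρ^2 equals the square root of the field discriminant. -/
/-!
Writing `1 + x + x ^ 2 = (x - ω) (x - ω²)` with `ω` a primitive cube root of unity, the product of
`1 + x + x ^ 2` over the roots of a monic cubic `f` is `f(ω) f(ω²)`, a symmetric expression in the
coefficients of `f`. For `f = X ^ 3 - a X ^ 2 - (a + 3) X - 1` it equals
`a ^ 2 - a (a + 3) + (a + 3) ^ 2 = a ^ 2 + 3 a + 9`.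
-/

theorem vieta_of_cubic_roots_of_pairwise_ne {R : Type*} [CommRing R] [IsDomain R]
    {s p q x y z : R}
    (hx : x ^ 3 - s * x ^ 2 + p * x - q = 0) (hy : y ^ 3 - s * y ^ 2 + p * y - q = 0)
    (hz : z ^ 3 - s * z ^ 2 + p * z - q = 0) (hxy : x ≠ y) (hxz : x ≠ z) (hyz : y ≠ z) :
    x + y + z = s ∧ x * y + x * z + y * z = p ∧ x * y * z = q := by
  -- divided differences of the cubic, at `(x, y)`, `(x, z)` and then `(x, y, z)`
  have hxy' : x ^ 2 + x * y + y ^ 2 - s * (x + y) + p = 0 :=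
    mul_left_cancel₀ (sub_ne_zero.mpr hxy) (by linear_combination hx - hy)
  have hxz' : x ^ 2 + x * z + z ^ 2 - s * (x + z) + p = 0 :=
    mul_left_cancel₀ (sub_ne_zero.mpr hxz) (by linear_combination hx - hz)
  have hsum : x + y + z = s :=
    mul_left_cancel₀ (sub_ne_zero.mpr hyz) (by linear_combination hxy' - hxz')
  have hpair : x * y + x * z + y * z = p := by
    linear_combination (x + y) * hsum - hxy'
  refine ⟨hsum, hpair, ?_⟩
  linear_combination hx - x ^ 2 * hsum + x * hpair

theorem prod_one_add_self_add_sq {R : Type*} [CommRing R] (x y z : R) :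
    (1 + x + x ^ 2) * (1 + y + y ^ 2) * (1 + z + z ^ 2) =
      (1 - x * y * z) ^ 2 + (1 - x * y * z) * (x + y + z - (x * y + x * z + y * z)) +
        (x + y + z) ^ 2 + (x + y + z) * (x * y + x * z + y * z) +
          (x * y + x * z + y * z) ^ 2 := by
  ring

theorem simplest_cubic_norm_exceptional_general (a : ℤ) (ρ ρ' ρ'' : ℝ)
    (hρ : ρ^3 - a*ρ^2 - (a+3)*ρ - 1 = 0)
    (hρ' : ρ'^3 - a*ρ'^2 - (a+3)*ρ' - 1 = 0)
    (hρ'' : ρ''^3 - a*ρ''^2 - (a+3)*ρ'' - 1 = 0)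
    (hlt1 : ρ' < ρ) (hlt2 : ρ'' < ρ) (hne : ρ' ≠ ρ'') :
    (1 + ρ + ρ^2) * (1 + ρ' + ρ'^2) * (1 + ρ'' + ρ''^2) = ((a^2 + 3*a + 9 : ℤ) : ℝ) := by
  obtain ⟨hsum, hpair, hprod⟩ := vieta_of_cubic_roots_of_pairwise_ne
    (s := (a : ℝ)) (p := -((a : ℝ) + 3)) (q := 1) (x := ρ) (y := ρ') (z := ρ'')
    (by linear_combination hρ) (by linear_combination hρ') (by linear_combination hρ'')
    hlt1.ne' hlt2.ne' hne
  rw [prod_one_add_self_add_sq, hsum, hpair, hprod]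
  push_cast
  ring

theorem simplest_cubic_norm_exceptional (a : ℤ) (ha : -1 ≤ a) (ρ ρ' ρ'' : ℝ)
    (hρ : ρ^3 - a*ρ^2 - (a+3)*ρ - 1 = 0)
    (hρ' : ρ'^3 - a*ρ'^2 - (a+3)*ρ' - 1 = 0)
    (hρ'' : ρ''^3 - a*ρ''^2 - (a+3)*ρ'' - 1 = 0)
    (hlt1 : ρ' < ρ) (hlt2 : ρ'' < ρ) (hne : ρ' ≠ ρ'') :
    (1 + ρ + ρ^2) * (1 + ρ' + ρ'^2) * (1 + ρ'' + ρ''^2) = ((a^2 + 3*a + 9 : ℤ) : ℝ) :=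
  simplest_cubic_norm_exceptional_general a ρ ρ' ρ'' hρ hρ' hρ'' hlt1 hlt2 hne
end

section
/- Let ρ be the largest root of x^3 - a x^2 - (a+3)x - 1 with a ≥ 7. If ε = ρ^k (ρ')^l is a unit in Z[ρ] (with k, l ∈ Z, ρ' the second root) such that all three conjugates of ε have absolute value less than a, then ε = 1. -/
/-! With `u = ρ`, `v = -ρ'` and `w = -ρ''` the three conjugates of `ε` have absolute values
`u^k v^l`, `v^k w^l`, `w^k u^l`, and `uvw = 1` turns these into `u^p v^q` for the three exponent
pairs `(k, l)`, `(-l, k - l)`, `(l - k, -k)` of an orbit of an order-3 map on `ℤ²`. Unless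
`k = l = 0`, one pair has `p ≥ 1` and `q ≥ 0`; since `u > a` and `v > 1`, that conjugate is then
larger than `a` in absolute value. -/

theorem mul_mul_eq_neg_of_cubic {K : Type*} [Field K] {b c d x y z : K}
    (hx : x ^ 3 + b * x ^ 2 + c * x + d = 0) (hy : y ^ 3 + b * y ^ 2 + c * y + d = 0)
    (hz : z ^ 3 + b * z ^ 2 + c * z + d = 0) (hxy : x ≠ y) (hxz : x ≠ z) (hyz : y ≠ z) :
    x * y * z = -d := by
  have hxy' : x ^ 2 + x * y + y ^ 2 + b * (x + y) + c = 0 :=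
    (mul_eq_zero.mp (by linear_combination hx - hy : (x - y) * _ = 0)).resolve_left
      (sub_ne_zero.mpr hxy)
  have hxz' : x ^ 2 + x * z + z ^ 2 + b * (x + z) + c = 0 :=
    (mul_eq_zero.mp (by linear_combination hx - hz : (x - z) * _ = 0)).resolve_left
      (sub_ne_zero.mpr hxz)
  have hsum : x + y + z + b = 0 :=
    (mul_eq_zero.mp (by linear_combination hxy' - hxz' : (y - z) * _ = 0)).resolve_left
      (sub_ne_zero.mpr hyz)
  linear_combination hx - x * hxy' + x * y * hsum

theorem zpow_mul_inv_mul_zpow {G : Type*} [CommGroupWithZero G] {v : G} (hv : v ≠ 0)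
    (u : G) (k l : ℤ) : v ^ k * (u * v)⁻¹ ^ l = u ^ (-l) * v ^ (k - l) := by
  rw [inv_zpow', mul_zpow, zpow_sub₀ hv, div_eq_mul_inv, ← zpow_neg]
  exact mul_left_comm _ _ _

theorem inv_mul_zpow_mul_zpow {G : Type*} [CommGroupWithZero G] {u : G} (hu : u ≠ 0)
    (v : G) (k l : ℤ) : (u * v)⁻¹ ^ k * u ^ l = u ^ (l - k) * v ^ (-k) := by
  rw [inv_zpow', mul_zpow, zpow_sub₀ hu, div_eq_mul_inv, ← zpow_neg, mul_comm, ← mul_assoc]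

theorem le_zpow_mul_zpow {α : Type*} [Field α] [LinearOrder α] [IsStrictOrderedRing α]
    {u v : α} (hu : 1 ≤ u) (hv : 1 ≤ v) {p q : ℤ} (hp : 1 ≤ p) (hq : 0 ≤ q) :
    u ≤ u ^ p * v ^ q :=
  calc u = u ^ (1 : ℤ) * 1 := by simp
    _ ≤ u ^ p * v ^ q := mul_le_mul (zpow_le_zpow_right₀ hu hp) (one_le_zpow₀ hv hq)
        zero_le_one (by positivity)

theorem eq_zero_of_zpow_orbit_lt {α : Type*} [Field α] [LinearOrder α] [IsStrictOrderedRing α]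
    {u v a : α} (hu : 1 ≤ u) (hau : a < u) (hv : 1 ≤ v) {k l : ℤ}
    (h₁ : u ^ k * v ^ l < a) (h₂ : u ^ (-l) * v ^ (k - l) < a)
    (h₃ : u ^ (l - k) * v ^ (-k) < a) : k = 0 ∧ l = 0 := by
  by_contra hkl
  have not_lt_of_pos : ∀ p q : ℤ, 1 ≤ p → 0 ≤ q → ¬ u ^ p * v ^ q < a := fun p q hp hq h =>
    (hau.trans_le (le_zpow_mul_zpow hu hv hp hq)).not_gt h
  have : (1 ≤ k ∧ 0 ≤ l) ∨ (1 ≤ -l ∧ 0 ≤ k - l) ∨ (1 ≤ l - k ∧ 0 ≤ -k) := by omega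
  rcases this with ⟨hp, hq⟩ | ⟨hp, hq⟩ | ⟨hp, hq⟩
  exacts [not_lt_of_pos _ _ hp hq h₁, not_lt_of_pos _ _ hp hq h₂, not_lt_of_pos _ _ hp hq h₃]

theorem simplest_cubic_small_unit (a : ℤ) (ha : 7 ≤ a) (ρ ρ' ρ'' : ℝ)
    (hρ : ρ^3 - a*ρ^2 - (a+3)*ρ - 1 = 0)
    (hρ' : ρ'^3 - a*ρ'^2 - (a+3)*ρ' - 1 = 0)
    (hρ'' : ρ''^3 - a*ρ''^2 - (a+3)*ρ'' - 1 = 0)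
    (hb1 : (a:ℝ) + 1 < ρ) (hb2 : -2 < ρ' ∧ ρ' < -1) (hb3 : -1 < ρ'' ∧ ρ'' < 0)
    (k l : ℤ)
    (hε : |ρ ^ k * ρ' ^ l| < a)
    (hε' : |ρ' ^ k * ρ'' ^ l| < a)
    (hε'' : |ρ'' ^ k * ρ ^ l| < a) :
    ρ ^ k * ρ' ^ l = 1 := by
  have ha' : (7 : ℝ) ≤ a := by exact_mod_cast ha
  have hprod : |ρ| * |ρ'| * |ρ''| = 1 := by
    rw [← abs_mul, ← abs_mul, mul_mul_eq_neg_of_cubic (b := -(a : ℝ)) (c := -(a + 3)) (d := -1)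
      (by linear_combination hρ) (by linear_combination hρ') (by linear_combination hρ'')
      (by linarith) (by linarith) (by linarith)]
    norm_num
  have hρ_abs : |ρ| = ρ := abs_of_pos (by linarith)
  have hρ'_abs : 1 ≤ |ρ'| := by rw [abs_of_neg (by linarith)]; linarith
  have hρ''_abs : |ρ''| = (|ρ| * |ρ'|)⁻¹ := eq_inv_of_mul_eq_one_right hprod
  simp only [abs_mul, abs_zpow] at hε hε' hε''
  rw [hρ''_abs, zpow_mul_inv_mul_zpow (by positivity)] at hε'
  rw [hρ''_abs, inv_mul_zpow_mul_zpow (by rw [hρ_abs]; linarith)] at hε''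
  obtain ⟨rfl, rfl⟩ := eq_zero_of_zpow_orbit_lt (by linarith) (by linarith) hρ'_abs hε hε' hε''
  simp
end

section
/- Let K be a totally real number field with ring of integers O_K, let α ∈ O_K be totally positive, and suppose there exists a totally positive δ in the codifferent of O_K with Tr(αδ) = 1. Then α is indecomposable: α cannot be written as β + γ with β, γ totally positive elements of O_K. -/
namespace NumberField

variable {K : Type*} [Field K] [NumberField K] [IsTotallyReal K]

theorem trace_pos_of_forall_embedding_pos {x : K} (hx : ∀ φ : K →+* ℝ, 0 < φ x) :
    0 < Algebra.trace ℚ K x := by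
  have hσ : ∀ σ : K →ₐ[ℚ] ℂ, 0 < (σ x).re := fun σ => by
    have hreal := IsTotallyReal.complexEmbedding_isReal σ.toRingHom
    have hσx : σ x = (hreal.embedding x : ℂ) := (hreal.coe_embedding_apply x).symm
    rw [hσx, Complex.ofReal_re]
    exact hx _
  have : 0 < (algebraMap ℚ ℂ (Algebra.trace ℚ K x)).re := by
    rw [trace_eq_sum_embeddings (E := ℂ), Complex.re_sum]
    have : Nonempty (K →ₐ[ℚ] ℂ) := ⟨IsAlgClosed.lift⟩
    exact Finset.sum_pos (fun σ _ => hσ σ) Finset.univ_nonempty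
  simpa using this

theorem one_le_trace_mul_of_forall_embedding_pos {δ x : K}
    (hint : ∃ t : ℤ, Algebra.trace ℚ K (δ * x) = t)
    (hδ : ∀ φ : K →+* ℝ, 0 < φ δ) (hx : ∀ φ : K →+* ℝ, 0 < φ x) :
    1 ≤ Algebra.trace ℚ K (δ * x) := by
  obtain ⟨t, ht⟩ := hint
  have hpos : 0 < Algebra.trace ℚ K (δ * x) := trace_pos_of_forall_embedding_pos fun φ => by
    rw [map_mul]
    exact mul_pos (hδ φ) (hx φ)
  rw [ht] at hpos ⊢
  exact_mod_cast (Int.cast_pos.mp hpos : 0 < t)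

end NumberField

open NumberField in
theorem trace_one_implies_indecomposable_general (K : Type*) [Field K] [NumberField K]
    (htotreal : ∀ v : InfinitePlace K, v.IsReal)
    (α : K)
    (δ : K)
    (hδcod : ∀ β : K, IsIntegral ℤ β → ∃ t : ℤ, Algebra.trace ℚ K (δ * β) = t)
    (hδpos : ∀ φ : K →+* ℝ, 0 < φ δ)
    (htrace : Algebra.trace ℚ K (α * δ) = 1) :
    ¬ ∃ β γ : K, IsIntegral ℤ β ∧ IsIntegral ℤ γ ∧
      (∀ φ : K →+* ℝ, 0 < φ β) ∧ (∀ φ : K →+* ℝ, 0 < φ γ) ∧ α = β + γ := by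
  rintro ⟨β, γ, hβint, hγint, hβpos, hγpos, rfl⟩
  have : IsTotallyReal K := ⟨htotreal⟩
  have hβ := one_le_trace_mul_of_forall_embedding_pos (hδcod β hβint) hδpos hβpos
  have hγ := one_le_trace_mul_of_forall_embedding_pos (hδcod γ hγint) hδpos hγpos
  rw [mul_comm, mul_add, map_add] at htrace
  linarith

open NumberField in
theorem trace_one_implies_indecomposable (K : Type*) [Field K] [NumberField K]
    (htotreal : ∀ v : InfinitePlace K, v.IsReal)
    (α : K) (hαint : IsIntegral ℤ α) (hαpos : ∀ φ : K →+* ℝ, 0 < φ α)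
    (δ : K)
    (hδcod : ∀ β : K, IsIntegral ℤ β → ∃ t : ℤ, Algebra.trace ℚ K (δ * β) = t)
    (hδpos : ∀ φ : K →+* ℝ, 0 < φ δ)
    (htrace : Algebra.trace ℚ K (α * δ) = 1) :
    ¬ ∃ β γ : K, IsIntegral ℤ β ∧ IsIntegral ℤ γ ∧
      (∀ φ : K →+* ℝ, 0 < φ β) ∧ (∀ φ : K →+* ℝ, 0 < φ γ) ∧ α = β + γ :=
  trace_one_implies_indecomposable_general K htotreal α δ hδcod hδpos htrace
end

section
/- Let ρ be the largest root of x^3 - a x^2 - (a+3)x - 1 with a ∈ Z, a ≥ 0, and suppose Z[ρ] is the full ring of integers of K = Q(ρ). Set δ = (1/(a^2+3a+9)) · (-4-a + (-1-2a)ρ + 2ρ^2)(-(a+2) - aρ + ρ^2). Then δ is a totally positive element of the codifferent of O_K, and for every α = v_1 + v_2ρ + v_3ρ^2 with v_i ∈ Z, one has Tr(αδ) = v_1 + v_3. -/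
/-!
The first factor of the numerator of `δ` is `(a² + 3a + 9) / f'(ρ)` in `ℚ(ρ)`, so
`δ = (ρ² - aρ - (a + 2)) / f'(ρ)` lies in the codifferent, and `f'(ρ) = (ρ - ρ')(ρ - ρ'')`.
Euler's identity `Tr((c₀ + c₁ρ + c₂ρ²) / f'(ρ)) = c₂` then computes `Tr(αδ)` as the
coefficient of `ρ²` in `α · (ρ² - aρ - (a + 2))` reduced modulo `f`, which is `v₁ + v₃`.
Positivity comes from the identity `ρ² · δ · (a² + 3a + 9) = ρ² + ρ + 1`, valid at every
root of `f`.
-/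

theorem cubic_root_pair_eq_zero {R : Type*} [CommRing R] [IsDomain R] {b c d x y : R}
    (hx : x^3 + b*x^2 + c*x + d = 0) (hy : y^3 + b*y^2 + c*y + d = 0) (hxy : x ≠ y) :
    x^2 + x*y + y^2 + b*(x + y) + c = 0 := by
  have h : (x - y) * (x^2 + x*y + y^2 + b*(x + y) + c) = 0 := by linear_combination hx - hy
  exact (mul_eq_zero.1 h).resolve_left (sub_ne_zero.2 hxy)

theorem cubic_deriv_eq_mul_sub_of_roots {R : Type*} [CommRing R] [IsDomain R] {b c d x y z : R}
    (hx : x^3 + b*x^2 + c*x + d = 0) (hy : y^3 + b*y^2 + c*y + d = 0)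
    (hz : z^3 + b*z^2 + c*z + d = 0) (hxy : x ≠ y) (hxz : x ≠ z) (hyz : y ≠ z) :
    3*x^2 + 2*b*x + c = (x - y) * (x - z) := by
  have hxy' := cubic_root_pair_eq_zero hx hy hxy
  have hxz' := cubic_root_pair_eq_zero hx hz hxz
  have hsum : x + y + z + b = 0 := by
    have h : (y - z) * (x + y + z + b) = 0 := by linear_combination hxy' - hxz'
    exact (mul_eq_zero.1 h).resolve_left (sub_ne_zero.2 hyz)
  linear_combination hxy' + (x - y) * hsum

theorem sum_quadratic_div_mul_sub {K : Type*} [Field K] {x y z : K}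
    (hxy : x ≠ y) (hxz : x ≠ z) (hyz : y ≠ z) (c₀ c₁ c₂ : K) :
    (c₀ + c₁*x + c₂*x^2) / ((x - y) * (x - z))
      + (c₀ + c₁*y + c₂*y^2) / ((y - x) * (y - z))
      + (c₀ + c₁*z + c₂*z^2) / ((z - x) * (z - y)) = c₂ := by
  have hxy₀ : x - y ≠ 0 := sub_ne_zero.2 hxy
  have hxz₀ : x - z ≠ 0 := sub_ne_zero.2 hxz
  have hyz₀ : y - z ≠ 0 := sub_ne_zero.2 hyz
  field_simp
  ring

section SimplestCubic

variable {R : Type*} [CommRing R] {a t : R}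

theorem simplest_cubic_first_factor_mul_deriv (ht : t^3 - a*t^2 - (a+3)*t - 1 = 0) :
    (-4 - a + (-1 - 2*a)*t + 2*t^2) * (3*t^2 - 2*a*t - (a+3)) = a^2 + 3*a + 9 := by
  linear_combination (6*t - 3 - 4*a) * ht

theorem simplest_cubic_sq_mul_numerator (ht : t^3 - a*t^2 - (a+3)*t - 1 = 0) :
    t^2 * ((-4 - a + (-1 - 2*a)*t + 2*t^2) * (-(a+2) - a*t + t^2)) = t^2 + t + 1 := by
  linear_combination (2*t^3 - (1 + 2*a)*t^2 - (2 + a)*t + 1) * ht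

theorem simplest_cubic_mul_second_factor (ht : t^3 - a*t^2 - (a+3)*t - 1 = 0) (v₁ v₂ v₃ : R) :
    (v₁ + v₂*t + v₃*t^2) * (-(a+2) - a*t + t^2)
      = (v₂ - (a+2)*v₁) + (v₂ + v₃ - a*v₁)*t + (v₁ + v₃)*t^2 := by
  linear_combination (v₂ + v₃*t) * ht

end SimplestCubic

theorem sq_add_three_mul_add_nine_pos (a : ℝ) : 0 < a^2 + 3*a + 9 := by
  nlinarith [sq_nonneg (2*a + 3)]

theorem simplest_cubic_delta_pos {a t : ℝ} (ht : t^3 - a*t^2 - (a+3)*t - 1 = 0) :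
    0 < ((-4 - a + (-1 - 2*a)*t + 2*t^2) * (-(a+2) - a*t + t^2)) / (a^2 + 3*a + 9) := by
  have hsq : 0 < t^2 * ((-4 - a + (-1 - 2*a)*t + 2*t^2) * (-(a+2) - a*t + t^2)) := by
    rw [simplest_cubic_sq_mul_numerator ht]
    nlinarith [sq_nonneg (2*t + 1)]
  exact div_pos (pos_of_mul_pos_right hsq (sq_nonneg t)) (sq_add_three_mul_add_nine_pos a)

theorem simplest_cubic_delta_eq {a t s u : ℝ} (ht : t^3 - a*t^2 - (a+3)*t - 1 = 0)
    (hs : s^3 - a*s^2 - (a+3)*s - 1 = 0) (hu : u^3 - a*u^2 - (a+3)*u - 1 = 0)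
    (hts : t ≠ s) (htu : t ≠ u) (hsu : s ≠ u) :
    ((-4 - a + (-1 - 2*a)*t + 2*t^2) * (-(a+2) - a*t + t^2)) / (a^2 + 3*a + 9)
      = (-(a+2) - a*t + t^2) / ((t - s) * (t - u)) := by
  have hderiv : 3*t^2 - 2*a*t - (a+3) = (t - s) * (t - u) := by
    have h := cubic_deriv_eq_mul_sub_of_roots (b := -a) (c := -(a+3)) (d := -1)
      (by linear_combination ht) (by linear_combination hs) (by linear_combination hu) hts htu hsu
    linear_combination h
  have hprod : (t - s) * (t - u) ≠ 0 := mul_ne_zero (sub_ne_zero.2 hts) (sub_ne_zero.2 htu)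
  rw [div_eq_div_iff (sq_add_three_mul_add_nine_pos a).ne' hprod, ← hderiv]
  linear_combination (-(a+2) - a*t + t^2) * simplest_cubic_first_factor_mul_deriv ht

theorem simplest_cubic_codifferent_trace_general (a : ℤ) (ρ ρ' ρ'' : ℝ)
    (hρ : ρ^3 - a*ρ^2 - (a+3)*ρ - 1 = 0)
    (hρ' : ρ'^3 - a*ρ'^2 - (a+3)*ρ' - 1 = 0)
    (hρ'' : ρ''^3 - a*ρ''^2 - (a+3)*ρ'' - 1 = 0)
    (hlt1 : ρ' < ρ) (hlt2 : ρ'' < ρ) (hne : ρ' ≠ ρ'') :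
    let δ : ℝ → ℝ := fun r =>
      ((-4 - a + (-1 - 2*a)*r + 2*r^2) * (-(a+2) - a*r + r^2)) / (a^2 + 3*a + 9)
    -- δ is a totally positive element of the codifferent
    (0 < δ ρ ∧ 0 < δ ρ' ∧ 0 < δ ρ'') ∧
    -- Tr(αδ) = v₁ + v₃ for α = v₁ + v₂ρ + v₃ρ²
    (∀ v₁ v₂ v₃ : ℤ,
      ((v₁:ℝ) + v₂*ρ + v₃*ρ^2) * δ ρ + ((v₁:ℝ) + v₂*ρ' + v₃*ρ'^2) * δ ρ'
        + ((v₁:ℝ) + v₂*ρ'' + v₃*ρ''^2) * δ ρ'' = (v₁:ℝ) + v₃) := by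
  intro δ
  refine ⟨⟨simplest_cubic_delta_pos hρ, simplest_cubic_delta_pos hρ',
    simplest_cubic_delta_pos hρ''⟩, fun v₁ v₂ v₃ => ?_⟩
  simp only [δ]
  rw [simplest_cubic_delta_eq hρ hρ' hρ'' hlt1.ne' hlt2.ne' hne,
    simplest_cubic_delta_eq hρ' hρ hρ'' hlt1.ne hne hlt2.ne',
    simplest_cubic_delta_eq hρ'' hρ hρ' hlt2.ne hne.symm hlt1.ne',
    ← mul_div_assoc, ← mul_div_assoc, ← mul_div_assoc,
    simplest_cubic_mul_second_factor hρ, simplest_cubic_mul_second_factor hρ',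
    simplest_cubic_mul_second_factor hρ'']
  exact sum_quadratic_div_mul_sub hlt1.ne' hlt2.ne' hne _ _ _

theorem simplest_cubic_codifferent_trace (a : ℤ) (ha : 0 ≤ a) (ρ ρ' ρ'' : ℝ)
    (hρ : ρ^3 - a*ρ^2 - (a+3)*ρ - 1 = 0)
    (hρ' : ρ'^3 - a*ρ'^2 - (a+3)*ρ' - 1 = 0)
    (hρ'' : ρ''^3 - a*ρ''^2 - (a+3)*ρ'' - 1 = 0)
    (hlt1 : ρ' < ρ) (hlt2 : ρ'' < ρ) (hne : ρ' ≠ ρ'') :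
    let δ : ℝ → ℝ := fun r =>
      ((-4 - a + (-1 - 2*a)*r + 2*r^2) * (-(a+2) - a*r + r^2)) / (a^2 + 3*a + 9)
    -- δ is a totally positive element of the codifferent
    (0 < δ ρ ∧ 0 < δ ρ' ∧ 0 < δ ρ'') ∧
    -- Tr(αδ) = v₁ + v₃ for α = v₁ + v₂ρ + v₃ρ²
    (∀ v₁ v₂ v₃ : ℤ,
      ((v₁:ℝ) + v₂*ρ + v₃*ρ^2) * δ ρ + ((v₁:ℝ) + v₂*ρ' + v₃*ρ'^2) * δ ρ'
        + ((v₁:ℝ) + v₂*ρ'' + v₃*ρ''^2) * δ ρ'' = (v₁:ℝ) + v₃) :=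
  simplest_cubic_codifferent_trace_general a ρ ρ' ρ'' hρ hρ' hρ'' hlt1 hlt2 hne
end

section
/- Let K be the simplest cubic field with a ≥ 0 and O_K = Z[ρ]. Every element of the form -v - wρ + (v+2)ρ^2 with 0 ≤ v ≤ a and (v+1)(a+1)+1 ≤ w ≤ (v+1)(a+2) is decomposable: it equals [-v - (a+1)(v+1)ρ + (v+1)ρ^2] + [-(w - (a+1)(v+1))ρ + ρ^2], and both summands are totally positive. -/
/-!
The decomposition itself is a polynomial identity; the work is total positivity. Since
`t ↦ -1/(1+t)` permutes the roots of `x^3 - a x^2 - (a+3) x - 1`, the root in `(-1, 0)` is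
`ρ'' = -1/(1+ρ)`. At `ρ` (after multiplying by `ρ` and reducing with the cubic) and at `ρ''`
(after multiplying by `ρ(1+ρ)^2`) the first summand becomes a polynomial in `ρ` that is visibly
positive for `a + 1 < ρ < a + 2`; at `ρ' < -1` it is positive termwise. The second summand is
`t (t - c)` with `0 ≤ c < ρ`, positive at every root.
-/

section SimplestCubic

variable {a ρ : ℝ}

theorem simplest_cubic_factor (hρ : ρ^3 - a*ρ^2 - (a+3)*ρ - 1 = 0) (t : ℝ) :
    ρ * (1 + ρ) * (t^3 - a*t^2 - (a+3)*t - 1)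
      = (t - ρ) * ((1 + ρ) * t + 1) * (ρ * t + 1 + ρ) := by
  linear_combination (t^2 + t) * hρ

theorem simplest_cubic_root_mul_one_add_eq (hρ : ρ^3 - a*ρ^2 - (a+3)*ρ - 1 = 0) (hρ0 : 0 < ρ)
    {t : ℝ} (ht : t^3 - a*t^2 - (a+3)*t - 1 = 0) (ht1 : -1 < t) (htρ : t < ρ) :
    (1 + ρ) * t + 1 = 0 := by
  have hprod := simplest_cubic_factor hρ t
  rw [ht, mul_zero, eq_comm] at hprod
  have hpos : 0 < ρ * t + 1 + ρ := by nlinarith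
  rcases mul_eq_zero.1 hprod with h | h
  · exact (mul_eq_zero.1 h).resolve_left (sub_ne_zero.2 htρ.ne)
  · exact absurd h hpos.ne'

theorem simplest_cubic_root_lt_add_two (hρ : ρ^3 - a*ρ^2 - (a+3)*ρ - 1 = 0) (ha : 0 ≤ a) :
    ρ < a + 2 := by
  by_contra! h
  have hρ0 : 0 ≤ ρ := by linarith
  nlinarith [mul_nonneg (mul_nonneg (sub_nonneg.2 h) hρ0) (by linarith : 0 ≤ ρ + 1)]

variable {v : ℝ}

theorem first_summand_pos_of_lt_neg_one (ha : 0 ≤ a) (hv : 0 ≤ v) {t : ℝ} (ht : t < -1) :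
    0 < -v - (a+1)*(v+1)*t + (v+1)*t^2 := by
  have h1 := mul_nonneg (mul_nonneg (by linarith : 0 ≤ a + 1) (by linarith : 0 ≤ v + 1))
    (by linarith : 0 ≤ -t)
  have h2 := mul_pos (by linarith : 0 < v + 1)
    (mul_pos (by linarith : 0 < -1 - t) (by linarith : 0 < 1 - t))
  nlinarith

theorem first_summand_pos_at_root (hρ : ρ^3 - a*ρ^2 - (a+3)*ρ - 1 = 0) (hv : 0 ≤ v)
    (hρ0 : 0 < ρ) (hρa : ρ < a + 2) :
    0 < -v - (a+1)*(v+1)*ρ + (v+1)*ρ^2 := by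
  have h : (-v - (a+1)*(v+1)*ρ + (v+1)*ρ^2) * ρ = (v+1)*ρ*(a+2-ρ) + ρ + (v+1) := by
    linear_combination (v+1)*hρ
  have : 0 < (v+1)*ρ*(a+2-ρ) + ρ + (v+1) := by
    have := mul_pos (mul_pos (by linarith : 0 < v + 1) hρ0) (by linarith : 0 < a + 2 - ρ)
    linarith
  exact pos_of_mul_pos_left (h ▸ this) hρ0.le

theorem first_summand_pos_at_conj (hρ : ρ^3 - a*ρ^2 - (a+3)*ρ - 1 = 0) (hv0 : 0 ≤ v)
    (hva : v ≤ a) (hρa : a + 1 < ρ) {t : ℝ} (ht : (1 + ρ) * t + 1 = 0) :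
    0 < -v - (a+1)*(v+1)*t + (v+1)*t^2 := by
  have h : (-v - (a+1)*(v+1)*t + (v+1)*t^2) * ((1+ρ)^2*ρ)
      = (a-v+1)*ρ*(ρ-(a+1)) + ((a+3)*(a-v)+3)*ρ - v := by
    linear_combination (((v+1)*(t*(1+ρ)-1) - (a+1)*(v+1)*(1+ρ))*ρ)*ht - v*hρ
  have : 0 < (a-v+1)*ρ*(ρ-(a+1)) + ((a+3)*(a-v)+3)*ρ - v := by
    have h1 := mul_pos (mul_pos (by linarith : 0 < a - v + 1) (by linarith : 0 < ρ))
      (by linarith : 0 < ρ - (a+1))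
    have h2 := mul_nonneg (mul_nonneg (by linarith : 0 ≤ a + 3) (by linarith : 0 ≤ a - v))
      (by linarith : 0 ≤ ρ)
    nlinarith
  exact pos_of_mul_pos_left (h ▸ this) (mul_pos (by nlinarith) (by linarith)).le

end SimplestCubic

theorem second_summand_pos {c t : ℝ} (hc : 0 ≤ c) (ht : t < 0 ∨ c < t) : 0 < -c*t + t^2 := by
  rcases ht with ht | ht <;> nlinarith

theorem simplest_cubic_decomposable_general (a : ℤ) (ha : 0 ≤ a) (ρ ρ' ρ'' : ℝ)
    (hρ : ρ^3 - a*ρ^2 - (a+3)*ρ - 1 = 0)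
    (hρ'' : ρ''^3 - a*ρ''^2 - (a+3)*ρ'' - 1 = 0)
    (hb1 : (a:ℝ) + 1 < ρ) (hb2 : -2 < ρ' ∧ ρ' < -1) (hb3 : -1 < ρ'' ∧ ρ'' < 0)
    (v w : ℤ) (hv : 0 ≤ v ∧ v ≤ a)
    (hw : (v+1)*(a+1) + 1 ≤ w ∧ w ≤ (v+1)*(a+2)) :
    -- the element decomposes as the sum of the two summands
    (-(v:ℝ) - w*ρ + (v+2)*ρ^2
      = (-(v:ℝ) - (a+1)*(v+1)*ρ + (v+1)*ρ^2)
        + (-((w:ℝ) - (a+1)*(v+1))*ρ + ρ^2)) ∧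
    -- and both summands are totally positive
    (∀ r ∈ ({ρ, ρ', ρ''} : Set ℝ),
      0 < -(v:ℝ) - (a+1)*(v+1)*r + (v+1)*r^2 ∧
      0 < -((w:ℝ) - (a+1)*(v+1))*r + r^2) := by
  obtain ⟨hv0, hva⟩ : (0:ℝ) ≤ v ∧ (v:ℝ) ≤ a := by exact_mod_cast hv
  obtain ⟨hw1, hw2⟩ : ((v:ℝ)+1)*(a+1) + 1 ≤ w ∧ (w:ℝ) ≤ (v+1)*(a+2) := by
    exact_mod_cast hw
  have ha : (0:ℝ) ≤ a := by exact_mod_cast ha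
  have hρ0 : 0 < ρ := by linarith
  have hρ2 := simplest_cubic_root_lt_add_two hρ ha
  have hc0 : (0:ℝ) ≤ w - (a+1)*(v+1) := by linarith
  have hcρ : (w:ℝ) - (a+1)*(v+1) < ρ := by linarith
  have hρ''ρ := simplest_cubic_root_mul_one_add_eq hρ hρ0 hρ'' hb3.1 (by linarith)
  refine ⟨by ring, ?_⟩
  rintro r (rfl | rfl | rfl)
  · exact ⟨first_summand_pos_at_root hρ hv0 hρ0 hρ2, second_summand_pos hc0 (.inr hcρ)⟩
  · exact ⟨first_summand_pos_of_lt_neg_one ha hv0 hb2.2,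
      second_summand_pos hc0 (.inl (by linarith))⟩
  · exact ⟨first_summand_pos_at_conj hρ hv0 hva hb1 hρ''ρ,
      second_summand_pos hc0 (.inl hb3.2)⟩

theorem simplest_cubic_decomposable (a : ℤ) (ha : 0 ≤ a) (ρ ρ' ρ'' : ℝ)
    (hρ : ρ^3 - a*ρ^2 - (a+3)*ρ - 1 = 0)
    (hρ' : ρ'^3 - a*ρ'^2 - (a+3)*ρ' - 1 = 0)
    (hρ'' : ρ''^3 - a*ρ''^2 - (a+3)*ρ'' - 1 = 0)
    (hb1 : (a:ℝ) + 1 < ρ) (hb2 : -2 < ρ' ∧ ρ' < -1) (hb3 : -1 < ρ'' ∧ ρ'' < 0)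
    (v w : ℤ) (hv : 0 ≤ v ∧ v ≤ a)
    (hw : (v+1)*(a+1) + 1 ≤ w ∧ w ≤ (v+1)*(a+2)) :
    -- the element decomposes as the sum of the two summands
    (-(v:ℝ) - w*ρ + (v+2)*ρ^2
      = (-(v:ℝ) - (a+1)*(v+1)*ρ + (v+1)*ρ^2)
        + (-((w:ℝ) - (a+1)*(v+1))*ρ + ρ^2)) ∧
    -- and both summands are totally positive
    (∀ r ∈ ({ρ, ρ', ρ''} : Set ℝ),
      0 < -(v:ℝ) - (a+1)*(v+1)*r + (v+1)*r^2 ∧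
      0 < -((w:ℝ) - (a+1)*(v+1))*r + r^2) :=
  simplest_cubic_decomposable_general a ha ρ ρ' ρ'' hρ hρ'' hb1 hb2 hb3 v w hv hw
end

section
/- Let K be the simplest cubic field with a ≥ 0 and O_K = Z[ρ]. Each element α = -v - wρ + (v+1)ρ^2 with 0 ≤ v ≤ a and v(a+2)+1 ≤ w ≤ (v+1)(a+1) is totally positive and indecomposable in O_K. -/
/-!
Write `g = X³ - aX² - (a+3)X - 1`, whose roots are `ρ' < -1 < ρ'' < 0 < ρ`, with `ρρ'ρ'' = 1`
and `ρ'' = -1/(1+ρ)`. Total positivity of `α` is a direct estimate at each root.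

For indecomposability, put `δ = (ρ+1)/(ρ g'(ρ))`. The signs of `ρ+1`, `ρ` and `g'` at the three
roots make `δ` totally positive, and by the Lagrange interpolation identities
`Tr(δ (b₀ + b₁ρ + b₂ρ²)) = b₀ + b₂`. So every totally positive `β ∈ ℤ[ρ]` has `b₀ + b₂ ≥ 1`.
Since `g` is irreducible over `ℚ`, comparing coefficients in `α = β + γ` gives
`(b₀ + b₂) + (c₀ + c₂) = -v + (v+1) = 1`, which is a contradiction.
-/

open Polynomial

lemma cubic_eq_mul_sub_of_roots {K : Type*} [Field K] {b c d r₁ r₂ r₃ : K}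
    (h₁₂ : r₁ ≠ r₂) (h₁₃ : r₁ ≠ r₃) (h₂₃ : r₂ ≠ r₃)
    (h₁ : r₁ ^ 3 + b * r₁ ^ 2 + c * r₁ + d = 0) (h₂ : r₂ ^ 3 + b * r₂ ^ 2 + c * r₂ + d = 0)
    (h₃ : r₃ ^ 3 + b * r₃ ^ 2 + c * r₃ + d = 0) (x : K) :
    x ^ 3 + b * x ^ 2 + c * x + d = (x - r₁) * (x - r₂) * (x - r₃) := by
  have q₁₂ : r₁ ^ 2 + r₁ * r₂ + r₂ ^ 2 + b * (r₁ + r₂) + c = 0 :=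
    (mul_eq_zero.1 (by linear_combination h₁ - h₂ : (r₁ - r₂) * _ = 0)).resolve_left
      (sub_ne_zero.2 h₁₂)
  have q₁₃ : r₁ ^ 2 + r₁ * r₃ + r₃ ^ 2 + b * (r₁ + r₃) + c = 0 :=
    (mul_eq_zero.1 (by linear_combination h₁ - h₃ : (r₁ - r₃) * _ = 0)).resolve_left
      (sub_ne_zero.2 h₁₃)
  have hsum : r₁ + r₂ + r₃ + b = 0 :=
    (mul_eq_zero.1 (by linear_combination q₁₂ - q₁₃ : (r₂ - r₃) * _ = 0)).resolve_left
      (sub_ne_zero.2 h₂₃)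
  linear_combination (x ^ 2 - r₁ ^ 2 - (x - r₁) * (r₁ + r₂)) * hsum + (x - r₁) * q₁₂ + h₁

lemma neg_inv_one_add_isRoot {K : Type*} [Field K] {a ρ : K}
    (hρ : ρ ^ 3 - a * ρ ^ 2 - (a + 3) * ρ - 1 = 0) (h : 1 + ρ ≠ 0) :
    (-1 / (1 + ρ)) ^ 3 - a * (-1 / (1 + ρ)) ^ 2 - (a + 3) * (-1 / (1 + ρ)) - 1 = 0 := by
  field_simp
  linear_combination -hρ

lemma eq_neg_inv_one_add_of_factorization {a ρ ρ' ρ'' : ℝ}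
    (hfac : ∀ x, x ^ 3 - a * x ^ 2 - (a + 3) * x - 1 = (x - ρ) * (x - ρ') * (x - ρ''))
    (hρ : 0 < ρ) (hρ' : ρ' < -1) :
    ρ'' = -1 / (1 + ρ) := by
  have hy₁ : -1 < -1 / (1 + ρ) := by rw [lt_div_iff₀ (by linarith)]; linarith
  have hy₂ : -1 / (1 + ρ) < 0 := div_neg_of_neg_of_pos (by norm_num) (by linarith)
  have hzero : (-1 / (1 + ρ) - ρ) * (-1 / (1 + ρ) - ρ') * (-1 / (1 + ρ) - ρ'') = 0 := by
    rw [← hfac]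
    have hρ₀ : ρ ^ 3 - a * ρ ^ 2 - (a + 3) * ρ - 1 = 0 := by simp [hfac]
    exact neg_inv_one_add_isRoot hρ₀ (by linarith)
  rcases mul_eq_zero.1 hzero with h | h
  · rcases mul_eq_zero.1 h with h | h <;> linarith
  · linarith

noncomputable def simplestCubic (a : ℤ) : ℤ[X] := X ^ 3 - C a * X ^ 2 - C (a + 3) * X - 1

lemma simplestCubic_monic (a : ℤ) : (simplestCubic a).Monic := by
  unfold simplestCubic; monicity!

lemma simplestCubic_natDegree (a : ℤ) : (simplestCubic a).natDegree = 3 := by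
  unfold simplestCubic; compute_degree!

lemma aeval_simplestCubic {A : Type*} [CommRing A] (a : ℤ) (x : A) :
    aeval x (simplestCubic a) = x ^ 3 - a * x ^ 2 - (a + 3) * x - 1 := by
  simp [simplestCubic, map_ofNat]

lemma irreducible_map_simplestCubic (a : ℤ) :
    Irreducible ((simplestCubic a).map (algebraMap ℤ ℚ)) := by
  refine irreducible_of_degree_le_three_of_not_isRoot ?_ fun x hx ↦ ?_
  · rw [(simplestCubic_monic a).natDegree_map, simplestCubic_natDegree]; decide
  rw [IsRoot, eval_map_algebraMap] at hx
  obtain ⟨n, rfl, -⟩ := exists_integer_of_is_root_of_monic (simplestCubic_monic a) hx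
  have hroot : n ^ 3 - a * n ^ 2 - (a + 3) * n - 1 = 0 := by
    rw [aeval_simplestCubic, algebraMap_int_eq, eq_intCast] at hx; exact_mod_cast hx
  have hunit : IsUnit n :=
    isUnit_of_dvd_one ⟨n ^ 2 - a * n - (a + 3), by linear_combination -hroot⟩
  rcases Int.isUnit_iff.1 hunit with rfl | rfl <;> lia

lemma eq_zero_of_add_mul_add_mul_sq_eq_zero {K : Type*} [Field K] [CharZero K] {a : ℤ} {ρ : K}
    (hρ : ρ ^ 3 - a * ρ ^ 2 - (a + 3) * ρ - 1 = 0) {p q r : ℤ} (h : p + q * ρ + r * ρ ^ 2 = 0) :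
    p = 0 ∧ q = 0 ∧ r = 0 := by
  have hmin : minpoly ℚ ρ = (simplestCubic a).map (algebraMap ℤ ℚ) := by
    refine (minpoly.eq_of_irreducible_of_monic (irreducible_map_simplestCubic a) ?_
      ((simplestCubic_monic a).map _)).symm
    rw [aeval_map_algebraMap, aeval_simplestCubic]; exact hρ
  set f : ℚ[X] := C (r : ℚ) * X ^ 2 + C (q : ℚ) * X + C (p : ℚ)
  have hf0 : f = 0 := by
    by_contra hne
    have hle := minpoly.degree_le_of_ne_zero ℚ ρ hne (by simp [f]; linear_combination h)
    rw [hmin, (simplestCubic_monic a).degree_map,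
      degree_eq_natDegree (simplestCubic_monic a).ne_zero, simplestCubic_natDegree] at hle
    have hf2 : f.degree ≤ 2 := by simp only [f]; compute_degree
    exact absurd (hle.trans hf2) (by norm_num)
  have c0 := congrArg (coeff · 0) hf0
  have c1 := congrArg (coeff · 1) hf0
  have c2 := congrArg (coeff · 2) hf0
  simp only [f, coeff_add, coeff_C_mul, coeff_X_pow, coeff_X, coeff_C, coeff_zero] at c0 c1 c2
  norm_num at c0 c1 c2
  exact ⟨c0, c1, c2⟩

-- For the roots of `g`, the left side is `Tr(δβ)`: the denominators are `rᵢ g'(rᵢ)`.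
lemma sum_mul_one_add_div_prod_sub_eq {K : Type*} [Field K] {r₁ r₂ r₃ : K}
    (h₁₂ : r₁ ≠ r₂) (h₁₃ : r₁ ≠ r₃) (h₂₃ : r₂ ≠ r₃) (h₁ : r₁ ≠ 0) (h₂ : r₂ ≠ 0) (h₃ : r₃ ≠ 0)
    (d₀ d₁ d₂ : K) :
    (d₀ + d₁ * r₁ + d₂ * r₁ ^ 2) * (r₁ + 1) / (r₁ * (r₁ - r₂) * (r₁ - r₃)) +
      (d₀ + d₁ * r₂ + d₂ * r₂ ^ 2) * (r₂ + 1) / (r₂ * (r₂ - r₁) * (r₂ - r₃)) +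
      (d₀ + d₁ * r₃ + d₂ * r₃ ^ 2) * (r₃ + 1) / (r₃ * (r₃ - r₁) * (r₃ - r₂)) =
      d₀ / (r₁ * r₂ * r₃) + d₂ := by
  field_simp [sub_ne_zero.2 h₁₂, sub_ne_zero.2 h₁₃, sub_ne_zero.2 h₂₃,
    sub_ne_zero.2 h₁₂.symm, sub_ne_zero.2 h₁₃.symm, sub_ne_zero.2 h₂₃.symm]
  ring

lemma one_le_add_of_pos_at_roots {ρ ρ' ρ'' : ℝ} (hprod : ρ * ρ' * ρ'' = 1) (hρ : 0 < ρ)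
    (hρ' : ρ' < -1) (hρ''₁ : -1 < ρ'') (hρ''₂ : ρ'' < 0) {d₀ d₁ d₂ : ℤ}
    (hd : ∀ r ∈ ({ρ, ρ', ρ''} : Set ℝ), 0 < (d₀ : ℝ) + d₁ * r + d₂ * r ^ 2) :
    1 ≤ d₀ + d₂ := by
  have hsum := sum_mul_one_add_div_prod_sub_eq (r₁ := ρ) (r₂ := ρ') (r₃ := ρ'')
    (by linarith) (by linarith) (by linarith) hρ.ne' (by linarith) hρ''₂.ne (d₀ : ℝ) d₁ d₂
  rw [hprod, div_one] at hsum
  have t₁ : 0 < (d₀ + d₁ * ρ + d₂ * ρ ^ 2) * (ρ + 1) / (ρ * (ρ - ρ') * (ρ - ρ'')) :=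
    div_pos (mul_pos (hd ρ (by simp)) (by linarith))
      (mul_pos (mul_pos hρ (by linarith)) (by linarith))
  have t₂ : 0 < (d₀ + d₁ * ρ' + d₂ * ρ' ^ 2) * (ρ' + 1) / (ρ' * (ρ' - ρ) * (ρ' - ρ'')) :=
    div_pos_of_neg_of_neg (mul_neg_of_pos_of_neg (hd ρ' (by simp)) (by linarith))
      (mul_neg_of_pos_of_neg (mul_pos_of_neg_of_neg (by linarith) (by linarith)) (by linarith))
  have t₃ : 0 < (d₀ + d₁ * ρ'' + d₂ * ρ'' ^ 2) * (ρ'' + 1) / (ρ'' * (ρ'' - ρ) * (ρ'' - ρ')) :=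
    div_pos (mul_pos (hd ρ'' (by simp)) (by linarith))
      (mul_pos (mul_pos_of_neg_of_neg hρ''₂ (by linarith)) (by linarith))
  have : (0 : ℝ) < d₀ + d₂ := hsum ▸ add_pos (add_pos t₁ t₂) t₃
  exact_mod_cast this

lemma pos_at_largest_root {a v w ρ : ℝ} (hρ : ρ ^ 3 - a * ρ ^ 2 - (a + 3) * ρ - 1 = 0)
    (hρpos : 0 < ρ) (hv : 0 ≤ v) (hw : w ≤ (v + 1) * (a + 1)) :
    0 < -v - w * ρ + (v + 1) * ρ ^ 2 := by
  have hgap : 1 < ρ * (ρ - a - 1) := by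
    have : (1 + ρ) * (ρ * (ρ - a - 1) - 1) = ρ := by linear_combination hρ
    nlinarith
  nlinarith [mul_nonneg (sub_nonneg.2 hw) hρpos.le]

lemma pos_of_lt_neg_one {v w x : ℝ} (hx : x < -1) (hv : 0 ≤ v) (hw : 0 ≤ w) :
    0 < -v - w * x + (v + 1) * x ^ 2 := by
  have hx2 : 1 < x ^ 2 := by nlinarith
  nlinarith [mul_nonneg hw (by linarith : 0 ≤ -x), mul_nonneg hv (sub_nonneg.2 hx2.le)]

lemma pos_at_neg_inv_one_add {a v w ρ : ℝ} (hρ : ρ ^ 3 - a * ρ ^ 2 - (a + 3) * ρ - 1 = 0)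
    (hρa : a + 1 < ρ) (hv : 0 ≤ v) (hva : v ≤ a) (hw : v * (a + 2) + 1 ≤ w) :
    0 < -v - w * (-1 / (1 + ρ)) + (v + 1) * (-1 / (1 + ρ)) ^ 2 := by
  have hρpos : 0 < ρ := by linarith
  have hnum : 0 < (v + 1) + w * (1 + ρ) - v * (1 + ρ) ^ 2 := by
    have : ρ * (1 + ρ) * (ρ - a - 1) = 2 * ρ + 1 := by linear_combination hρ
    nlinarith [mul_le_mul_of_nonneg_right hw (by linarith : 0 ≤ 1 + ρ)]
  have : -v - w * (-1 / (1 + ρ)) + (v + 1) * (-1 / (1 + ρ)) ^ 2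
      = ((v + 1) + w * (1 + ρ) - v * (1 + ρ) ^ 2) / (1 + ρ) ^ 2 := by
    field_simp
    ring
  rw [this]
  positivity

theorem simplest_cubic_triangle_indecomposable_general (a : ℤ) (ρ ρ' ρ'' : ℝ)
    (hρ : ρ^3 - a*ρ^2 - (a+3)*ρ - 1 = 0)
    (hρ' : ρ'^3 - a*ρ'^2 - (a+3)*ρ' - 1 = 0)
    (hρ'' : ρ''^3 - a*ρ''^2 - (a+3)*ρ'' - 1 = 0)
    (hb1 : (a:ℝ) + 1 < ρ) (hb2 : -2 < ρ' ∧ ρ' < -1) (hb3 : -1 < ρ'' ∧ ρ'' < 0)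
    (v w : ℤ) (hv : 0 ≤ v ∧ v ≤ a)
    (hw : v*(a+2) + 1 ≤ w ∧ w ≤ (v+1)*(a+1)) :
    -- α = -v - wρ + (v+1)ρ² is totally positive
    (∀ r ∈ ({ρ, ρ', ρ''} : Set ℝ), 0 < -(v:ℝ) - w*r + (v+1)*r^2) ∧
    -- and indecomposable in O_K = ℤ[ρ]
    ¬ ∃ b₀ b₁ b₂ c₀ c₁ c₂ : ℤ,
      (∀ r ∈ ({ρ, ρ', ρ''} : Set ℝ), 0 < (b₀:ℝ) + b₁*r + b₂*r^2) ∧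
      (∀ r ∈ ({ρ, ρ', ρ''} : Set ℝ), 0 < (c₀:ℝ) + c₁*r + c₂*r^2) ∧
      (-(v:ℝ) - w*ρ + (v+1)*ρ^2
        = ((b₀:ℝ) + b₁*ρ + b₂*ρ^2) + ((c₀:ℝ) + c₁*ρ + c₂*ρ^2)) := by
  obtain ⟨hv₀, hva⟩ := hv
  have hv₀' : (0 : ℝ) ≤ v := by exact_mod_cast hv₀
  have hva' : (v : ℝ) ≤ a := by exact_mod_cast hva
  have hw' : (v : ℝ) * (a + 2) + 1 ≤ w ∧ (w : ℝ) ≤ (v + 1) * (a + 1) := by exact_mod_cast hw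
  have hρpos : 0 < ρ := by linarith
  have hfac (x : ℝ) : x ^ 3 - a * x ^ 2 - (a + 3) * x - 1 = (x - ρ) * (x - ρ') * (x - ρ'') := by
    linear_combination cubic_eq_mul_sub_of_roots (b := -(a : ℝ)) (c := -(a + 3)) (d := -1)
      (r₁ := ρ) (r₂ := ρ') (r₃ := ρ'') (by linarith) (by linarith) (by linarith)
      (by linear_combination hρ) (by linear_combination hρ') (by linear_combination hρ'') x
  have hprod : ρ * ρ' * ρ'' = 1 := by linear_combination hfac 0
  refine ⟨?_, ?_⟩
  · simp only [Set.mem_insert_iff, Set.mem_singleton_iff]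
    rintro r (rfl | rfl | rfl)
    · exact pos_at_largest_root hρ hρpos hv₀' hw'.2
    · exact pos_of_lt_neg_one hb2.2 hv₀' (by nlinarith)
    · rw [eq_neg_inv_one_add_of_factorization hfac hρpos hb2.2]
      exact pos_at_neg_inv_one_add hρ hb1 hv₀' hva' hw'.1
  · rintro ⟨b₀, b₁, b₂, c₀, c₁, c₂, hβ, hγ, hsum⟩
    obtain ⟨h₀, -, h₂⟩ := eq_zero_of_add_mul_add_mul_sq_eq_zero hρ
      (p := b₀ + c₀ + v) (q := b₁ + c₁ + w) (r := b₂ + c₂ - (v + 1))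
      (by push_cast; linear_combination -hsum)
    have hb := one_le_add_of_pos_at_roots hprod hρpos hb2.2 hb3.1 hb3.2 hβ
    have hc := one_le_add_of_pos_at_roots hprod hρpos hb2.2 hb3.1 hb3.2 hγ
    omega

theorem simplest_cubic_triangle_indecomposable (a : ℤ) (ha : 0 ≤ a) (ρ ρ' ρ'' : ℝ)
    (hρ : ρ^3 - a*ρ^2 - (a+3)*ρ - 1 = 0)
    (hρ' : ρ'^3 - a*ρ'^2 - (a+3)*ρ' - 1 = 0)
    (hρ'' : ρ''^3 - a*ρ''^2 - (a+3)*ρ'' - 1 = 0)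
    (hb1 : (a:ℝ) + 1 < ρ) (hb2 : -2 < ρ' ∧ ρ' < -1) (hb3 : -1 < ρ'' ∧ ρ'' < 0)
    (v w : ℤ) (hv : 0 ≤ v ∧ v ≤ a)
    (hw : v*(a+2) + 1 ≤ w ∧ w ≤ (v+1)*(a+1)) :
    -- α = -v - wρ + (v+1)ρ² is totally positive
    (∀ r ∈ ({ρ, ρ', ρ''} : Set ℝ), 0 < -(v:ℝ) - w*r + (v+1)*r^2) ∧
    -- and indecomposable in O_K = ℤ[ρ]
    ¬ ∃ b₀ b₁ b₂ c₀ c₁ c₂ : ℤ,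
      (∀ r ∈ ({ρ, ρ', ρ''} : Set ℝ), 0 < (b₀:ℝ) + b₁*r + b₂*r^2) ∧
      (∀ r ∈ ({ρ, ρ', ρ''} : Set ℝ), 0 < (c₀:ℝ) + c₁*r + c₂*r^2) ∧
      (-(v:ℝ) - w*ρ + (v+1)*ρ^2
        = ((b₀:ℝ) + b₁*ρ + b₂*ρ^2) + ((c₀:ℝ) + c₁*ρ + c₂*ρ^2)) :=
  simplest_cubic_triangle_indecomposable_general a ρ ρ' ρ'' hρ hρ' hρ'' hb1 hb2 hb3 v w hv hw
end

section
/- Let K be the simplest cubic field with parameter a ≥ 0 and O_K = Z[ρ]. The element 1 + ρ + ρ^2 is totally positive and indecomposable, and min over totally positive δ in the codifferent O_K^∨ of Tr((1+ρ+ρ^2)δ) equals 2. -/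
/-!
Traces against the codifferent are computed by Euler's formula: for the three roots `r` of `f`,
`∑ rᵏ / f'(r)` equals `0, 0, 1, a, a² + a + 3` for `k = 0, …, 4`. This turns `Tr(β δ)`, for
`β ∈ ℤ[ρ]` and `δ = ν(ρ)/f'(ρ)` with `ν ∈ ℤ[ρ]`, into an integral bilinear form in the coordinates,
which is `≥ 1` when `β` and `δ` are totally positive.

Since `2 (1 + ρ + ρ²) = 1 + ρ² + (1 + ρ)²` is a sum of three totally positive elements,
`Tr((1 + ρ + ρ²) δ) ≥ 3/2`, hence `≥ 2`; equality holds for the totally positive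
`δ₂ = (ρ² - aρ - (a + 2)) / f'(ρ)`. If `1 + ρ + ρ² = β + γ` with `β, γ ≫ 0`, then both
`Tr(β δᵢ)` and `Tr(γ δᵢ)` equal `1` for `δ₂` and for `δ₁ = (ρ² - (a + 1)ρ - 1) / f'(ρ)`,
which forces `β = 1 + m (ρ² + ρ - 1)` and `γ = 1 + ρ + ρ² - β`; one of them is negative at `ρ''`.
Comparing coordinates in `ℤ[ρ]` uses that `f` has no rational root, hence is irreducible over `ℚ`.
-/

open Polynomial

theorem cubic_eq_mul_sub_of_roots_s12 {R : Type*} [CommRing R] [IsDomain R] {p q r x y z : R}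
    (hx : x ^ 3 + p * x ^ 2 + q * x + r = 0) (hy : y ^ 3 + p * y ^ 2 + q * y + r = 0)
    (hz : z ^ 3 + p * z ^ 2 + q * z + r = 0) (hxy : x ≠ y) (hxz : x ≠ z) (hyz : y ≠ z) (t : R) :
    t ^ 3 + p * t ^ 2 + q * t + r = (t - x) * (t - y) * (t - z) := by
  have hxy' : x ^ 2 + x * y + y ^ 2 + p * (x + y) + q = 0 :=
    (mul_eq_zero.mp (by linear_combination hx - hy : (x - y) * _ = 0)).resolve_left
      (sub_ne_zero.mpr hxy)
  have hxz' : x ^ 2 + x * z + z ^ 2 + p * (x + z) + q = 0 :=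
    (mul_eq_zero.mp (by linear_combination hx - hz : (x - z) * _ = 0)).resolve_left
      (sub_ne_zero.mpr hxz)
  have hsum : x + y + z + p = 0 :=
    (mul_eq_zero.mp (by linear_combination hxy' - hxz' : (y - z) * _ = 0)).resolve_left
      (sub_ne_zero.mpr hyz)
  linear_combination hx + (t - x) * hxy' + (t ^ 2 - (x + y) * t + x * y) * hsum

theorem sum_div_mul_sub_quartic {K : Type*} [Field K] {x y z : K} (hxy : x ≠ y) (hxz : x ≠ z)
    (hyz : y ≠ z) (c₀ c₁ c₂ c₃ c₄ : K) :
    (c₀ + c₁ * x + c₂ * x ^ 2 + c₃ * x ^ 3 + c₄ * x ^ 4) / ((x - y) * (x - z))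
      + (c₀ + c₁ * y + c₂ * y ^ 2 + c₃ * y ^ 3 + c₄ * y ^ 4) / ((y - x) * (y - z))
      + (c₀ + c₁ * z + c₂ * z ^ 2 + c₃ * z ^ 3 + c₄ * z ^ 4) / ((z - x) * (z - y))
      = c₂ + c₃ * (x + y + z) + c₄ * (x ^ 2 + y ^ 2 + z ^ 2 + x * y + x * z + y * z) := by
  have := sub_ne_zero.mpr hxy
  have := sub_ne_zero.mpr hxz
  have := sub_ne_zero.mpr hyz
  have := sub_ne_zero.mpr hxy.symm
  have := sub_ne_zero.mpr hxz.symm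
  have := sub_ne_zero.mpr hyz.symm
  field_simp
  ring

theorem simplestCubic_eval_rat_ne_zero (a : ℤ) (r : ℚ) :
    r ^ 3 - a * r ^ 2 - (a + 3) * r - 1 ≠ 0 := by
  intro hr
  have hmonic : (X ^ 3 - C a * X ^ 2 - C (a + 3) * X - 1 : ℤ[X]).Monic := by monicity!
  obtain ⟨n, rfl⟩ := isInteger_of_is_root_of_monic (K := ℚ) (r := r) hmonic
    (by simp [map_ofNat]; linear_combination hr)
  have hn : n * (n ^ 2 - a * n - (a + 3)) = 1 := by
    have : (n : ℚ) ^ 3 - a * n ^ 2 - (a + 3) * n - 1 = 0 := by simpa using hr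
    exact_mod_cast (by linear_combination this : (n : ℚ) * (n ^ 2 - a * n - (a + 3)) = 1)
  rcases Int.eq_one_or_neg_one_of_mul_eq_one hn with rfl | rfl <;> omega

theorem eq_zero_of_simplestCubic_root {a : ℤ} {ρ : ℝ}
    (hρ : ρ ^ 3 - a * ρ ^ 2 - (a + 3) * ρ - 1 = 0) {q₀ q₁ q₂ : ℤ}
    (hq : (q₀ : ℝ) + q₁ * ρ + q₂ * ρ ^ 2 = 0) : q₀ = 0 ∧ q₁ = 0 ∧ q₂ = 0 := by
  set P : ℚ[X] := X ^ 3 - C (a : ℚ) * X ^ 2 - C ((a : ℚ) + 3) * X - 1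
  set Q : ℚ[X] := C (q₀ : ℚ) + C (q₁ : ℚ) * X + C (q₂ : ℚ) * X ^ 2
  have hP : P.natDegree = 3 := by simp only [P]; compute_degree!
  have hirr : Irreducible P := irreducible_of_degree_le_three_of_not_isRoot (by simp [hP])
    fun r hr => simplestCubic_eval_rat_ne_zero a r (by simpa [P] using hr)
  have hdvd : P ∣ Q := (hirr.dvd_iff_aeval_eq_zero (b := ρ) (by simpa [P] using hρ)).mp
    (by simpa [Q] using hq)
  have hQ : Q = 0 := eq_zero_of_dvd_of_degree_lt hdvd <| by
    rw [degree_eq_natDegree hirr.ne_zero, hP]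
    simp only [Q]
    compute_degree!
  have hcoeff : ∀ n, Q.coeff n = 0 := by simp [hQ]
  have h₀ := hcoeff 0
  have h₁ := hcoeff 1
  have h₂ := hcoeff 2
  simp only [Q, coeff_add, coeff_C_mul, coeff_C, coeff_X_pow, coeff_X] at h₀ h₁ h₂
  norm_num at h₀ h₁ h₂
  exact ⟨h₀, h₁, h₂⟩

def quadVal (x y z : ℤ) (t : ℝ) : ℝ := x + y * t + z * t ^ 2

noncomputable def codiffVal (a x y z : ℤ) (t : ℝ) : ℝ :=
  quadVal x y z t / (3 * t ^ 2 - 2 * a * t - (a + 3))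

def TotallyPositive (ρ ρ' ρ'' : ℝ) (g : ℝ → ℝ) : Prop := ∀ r ∈ ({ρ, ρ', ρ''} : Set ℝ), 0 < g r

theorem totallyPositive_iff {ρ ρ' ρ'' : ℝ} {g : ℝ → ℝ} :
    TotallyPositive ρ ρ' ρ'' g ↔ 0 < g ρ ∧ 0 < g ρ' ∧ 0 < g ρ'' := by
  simp [TotallyPositive]

/-- `Tr((b₀ + b₁ρ + b₂ρ²) · (x + yρ + zρ²) / f'(ρ))`, by Euler's formula (see `trace_eq`). -/
def traceForm (a b₀ b₁ b₂ x y z : ℤ) : ℤ :=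
  b₀ * z + b₁ * (y + a * z) + b₂ * (x + a * y + (a ^ 2 + a + 3) * z)

theorem traceForm_δ₁ (a b₀ b₁ b₂ : ℤ) :
    traceForm a b₀ b₁ b₂ (-1) (-(a + 1)) 1 = b₀ - b₁ + 2 * b₂ := by
  simp only [traceForm]; ring

theorem traceForm_δ₂ (a b₀ b₁ b₂ : ℤ) :
    traceForm a b₀ b₁ b₂ (-(a + 2)) (-a) 1 = b₀ + b₂ := by
  simp only [traceForm]; ring

structure SimplestCubicRoots (a : ℤ) (ρ ρ' ρ'' : ℝ) : Prop where
  nonneg : 0 ≤ a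
  factor : ∀ t : ℝ, t ^ 3 - a * t ^ 2 - (a + 3) * t - 1 = (t - ρ) * (t - ρ') * (t - ρ'')
  add_one_lt_rho : (a : ℝ) + 1 < ρ
  rho'_lt_neg_one : ρ' < -1
  neg_one_lt_rho'' : -1 < ρ''
  rho''_neg : ρ'' < 0

namespace SimplestCubicRoots

variable {a : ℤ} {ρ ρ' ρ'' : ℝ}

theorem of_roots (ha : 0 ≤ a) (hρ : ρ ^ 3 - a * ρ ^ 2 - (a + 3) * ρ - 1 = 0)
    (hρ' : ρ' ^ 3 - a * ρ' ^ 2 - (a + 3) * ρ' - 1 = 0)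
    (hρ'' : ρ'' ^ 3 - a * ρ'' ^ 2 - (a + 3) * ρ'' - 1 = 0)
    (hb1 : (a : ℝ) + 1 < ρ) (hb2 : ρ' < -1) (hb3 : -1 < ρ'' ∧ ρ'' < 0) :
    SimplestCubicRoots a ρ ρ' ρ'' := by
  have ha' : (0 : ℝ) ≤ a := by exact_mod_cast ha
  refine ⟨ha, fun t => ?_, hb1, hb2, hb3.1, hb3.2⟩
  have := cubic_eq_mul_sub_of_roots_s12 (x := ρ) (y := ρ') (z := ρ'') (p := -(a : ℝ))
    (q := -((a : ℝ) + 3)) (r := -1)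
    (by linear_combination hρ) (by linear_combination hρ') (by linear_combination hρ'')
    (by linarith) (by linarith) (by linarith) t
  linear_combination this

theorem root (h : SimplestCubicRoots a ρ ρ' ρ'') :
    ∀ r ∈ ({ρ, ρ', ρ''} : Set ℝ), r ^ 3 - a * r ^ 2 - (a + 3) * r - 1 = 0 := by
  simp only [Set.mem_insert_iff, Set.mem_singleton_iff]
  rintro r (rfl | rfl | rfl) <;> rw [h.factor] <;> ring

theorem sum_eq (h : SimplestCubicRoots a ρ ρ' ρ'') : ρ + ρ' + ρ'' = a := by
  linear_combination (h.factor 1 + h.factor (-1)) / 2 - h.factor 0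

theorem sum_mul_eq (h : SimplestCubicRoots a ρ ρ' ρ'') :
    ρ * ρ' + ρ * ρ'' + ρ' * ρ'' = -(a + 3) := by
  linear_combination (h.factor (-1) - h.factor 1) / 2

theorem deriv_eq (h : SimplestCubicRoots a ρ ρ' ρ'') (t : ℝ) :
    3 * t ^ 2 - 2 * a * t - (a + 3)
      = (t - ρ) * (t - ρ') + (t - ρ) * (t - ρ'') + (t - ρ') * (t - ρ'') := by
  linear_combination 2 * t * h.sum_eq - h.sum_mul_eq

theorem rho_lt_add_two (h : SimplestCubicRoots a ρ ρ' ρ'') : ρ < a + 2 := by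
  have ha : (0 : ℝ) ≤ a := by exact_mod_cast h.nonneg
  have hval := h.factor (a + 2)
  have hpos : 0 < (a + 2 - ρ') * (a + 2 - ρ'') :=
    mul_pos (by linarith [h.rho'_lt_neg_one]) (by linarith [h.rho''_neg])
  by_contra! hle
  nlinarith [mul_nonpos_of_nonpos_of_nonneg (sub_nonpos.2 hle) hpos.le]

/-- `f(-1/(a+2)) = (2a+3)/(a+2)³ > 0` puts `ρ''` to the right of `-1/(a+2)`. -/
theorem mul_rho''_add_one_pos (h : SimplestCubicRoots a ρ ρ' ρ'') : 0 < (a + 2) * ρ'' + 1 := by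
  have ha : (0 : ℝ) ≤ a := by exact_mod_cast h.nonneg
  set s : ℝ := -1 / (a + 2) with hs_def
  have hs : (a + 2) * s = -1 := by rw [hs_def]; field_simp
  have hs_neg : s < 0 := by nlinarith
  have hs_gt : -1 < s := by nlinarith
  have hval : 0 < (s - ρ) * (s - ρ') * (s - ρ'') := by
    rw [← h.factor s, show s ^ 3 - a * s ^ 2 - (a + 3) * s - 1 = (2 * a + 3) * (-s) ^ 3 by
      linear_combination (2 * s ^ 2 - s - 1) * hs]
    exact mul_pos (by linarith) (pow_pos (neg_pos.2 hs_neg) 3)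
  have hlt : s < ρ'' := by
    by_contra! hle
    have : (s - ρ) * (s - ρ') * (s - ρ'') ≤ 0 :=
      mul_nonpos_of_nonpos_of_nonneg (mul_nonpos_of_nonpos_of_nonneg
        (by linarith [h.add_one_lt_rho]) (by linarith [h.rho'_lt_neg_one])) (by linarith)
    linarith
  nlinarith

theorem ne_zero_of_mem (h : SimplestCubicRoots a ρ ρ' ρ'') {r : ℝ}
    (hr : r ∈ ({ρ, ρ', ρ''} : Set ℝ)) : r ≠ 0 := by
  rintro rfl
  simpa using h.root 0 hr

theorem ne_neg_one_of_mem (h : SimplestCubicRoots a ρ ρ' ρ'') {r : ℝ}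
    (hr : r ∈ ({ρ, ρ', ρ''} : Set ℝ)) : r ≠ -1 := by
  rintro rfl
  linarith [h.root (-1) hr]

theorem deriv_rho (h : SimplestCubicRoots a ρ ρ' ρ'') :
    3 * ρ ^ 2 - 2 * a * ρ - (a + 3) = (ρ - ρ') * (ρ - ρ'') := by
  rw [h.deriv_eq]; ring

theorem deriv_rho' (h : SimplestCubicRoots a ρ ρ' ρ'') :
    3 * ρ' ^ 2 - 2 * a * ρ' - (a + 3) = (ρ' - ρ) * (ρ' - ρ'') := by
  rw [h.deriv_eq]; ring

theorem deriv_rho'' (h : SimplestCubicRoots a ρ ρ' ρ'') :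
    3 * ρ'' ^ 2 - 2 * a * ρ'' - (a + 3) = (ρ'' - ρ) * (ρ'' - ρ') := by
  rw [h.deriv_eq]; ring

theorem bounds (h : SimplestCubicRoots a ρ ρ' ρ'') : 0 < ρ ∧ ρ' < -1 ∧ -1 < ρ'' ∧ ρ'' < 0 :=
  ⟨by linarith [h.add_one_lt_rho, (show (0 : ℝ) ≤ a by exact_mod_cast h.nonneg)],
    h.rho'_lt_neg_one, h.neg_one_lt_rho'', h.rho''_neg⟩

theorem trace_eq (h : SimplestCubicRoots a ρ ρ' ρ'') (b₀ b₁ b₂ x y z : ℤ) :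
    quadVal b₀ b₁ b₂ ρ * codiffVal a x y z ρ + quadVal b₀ b₁ b₂ ρ' * codiffVal a x y z ρ'
      + quadVal b₀ b₁ b₂ ρ'' * codiffVal a x y z ρ'' = traceForm a b₀ b₁ b₂ x y z := by
  obtain ⟨h₀, h₁, h₂, h₃⟩ := h.bounds
  have key := sum_div_mul_sub_quartic (x := ρ) (y := ρ') (z := ρ'') (by linarith) (by linarith)
    (by linarith) (b₀ * x) (b₀ * y + b₁ * x) (b₀ * z + b₁ * y + b₂ * x) (b₁ * z + b₂ * y) (b₂ * z)
  simp only [codiffVal, quadVal, h.deriv_rho, h.deriv_rho', h.deriv_rho'']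
  push_cast [traceForm]
  linear_combination key + ((b₁ * z + b₂ * y : ℝ) + b₂ * z * (ρ + ρ' + ρ'' + a)) * h.sum_eq
    - (b₂ * z : ℝ) * h.sum_mul_eq

theorem traceForm_pos (h : SimplestCubicRoots a ρ ρ' ρ'') {b₀ b₁ b₂ x y z : ℤ}
    (hβ : TotallyPositive ρ ρ' ρ'' (quadVal b₀ b₁ b₂))
    (hδ : TotallyPositive ρ ρ' ρ'' (codiffVal a x y z)) : 0 < traceForm a b₀ b₁ b₂ x y z := by
  rw [totallyPositive_iff] at hβ hδ
  have : (0 : ℝ) < traceForm a b₀ b₁ b₂ x y z := by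
    rw [← h.trace_eq]
    exact add_pos (add_pos (mul_pos hβ.1 hδ.1) (mul_pos hβ.2.1 hδ.2.1)) (mul_pos hβ.2.2 hδ.2.2)
  exact_mod_cast this

theorem totallyPositive_codiffVal (h : SimplestCubicRoots a ρ ρ' ρ'') {x y z : ℤ}
    (hρ : 0 < quadVal x y z ρ) (hρ' : 0 < quadVal x y z ρ') (hρ'' : quadVal x y z ρ'' < 0) :
    TotallyPositive ρ ρ' ρ'' (codiffVal a x y z) := by
  obtain ⟨h₀, h₁, h₂, h₃⟩ := h.bounds
  rw [totallyPositive_iff]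
  simp only [codiffVal, h.deriv_rho, h.deriv_rho', h.deriv_rho'']
  exact ⟨div_pos hρ (mul_pos (by linarith) (by linarith)),
    div_pos hρ' (mul_pos_of_neg_of_neg (by linarith) (by linarith)),
    div_pos_of_neg_of_neg hρ'' (mul_neg_of_neg_of_pos (by linarith) (by linarith))⟩

theorem totallyPositive_δ₂ (h : SimplestCubicRoots a ρ ρ' ρ'') :
    TotallyPositive ρ ρ' ρ'' (codiffVal a (-(a + 2)) (-a) 1) := by
  have hmul : ∀ r ∈ ({ρ, ρ', ρ''} : Set ℝ), quadVal (-(a + 2)) (-a) 1 r * r = r + 1 := by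
    intro r hr
    simp only [quadVal]
    push_cast
    linear_combination h.root r hr
  obtain ⟨h₀, h₁, h₂, h₃⟩ := h.bounds
  refine h.totallyPositive_codiffVal ?_ ?_ ?_
  · nlinarith [hmul ρ (by simp)]
  · nlinarith [hmul ρ' (by simp)]
  · nlinarith [hmul ρ'' (by simp)]

theorem totallyPositive_δ₁ (h : SimplestCubicRoots a ρ ρ' ρ'') :
    TotallyPositive ρ ρ' ρ'' (codiffVal a (-1) (-(a + 1)) 1) := by
  have hmul : ∀ r ∈ ({ρ, ρ', ρ''} : Set ℝ),
      quadVal (-1) (-(a + 1)) 1 r * r = -r ^ 2 + (a + 2) * r + 1 := by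
    intro r hr
    simp only [quadVal]
    push_cast
    linear_combination h.root r hr
  have ha : (0 : ℝ) ≤ a := by exact_mod_cast h.nonneg
  obtain ⟨h₀, h₁, h₂, h₃⟩ := h.bounds
  refine h.totallyPositive_codiffVal ?_ ?_ ?_
  · nlinarith [hmul ρ (by simp), h.rho_lt_add_two]
  · simp only [quadVal]; push_cast; nlinarith
  · have hroot := h.root ρ'' (by simp)
    -- `(-r² + (a+2) r + 1)(r + 2) = (a+2) r + 1` at every root `r`
    have : 0 < -ρ'' ^ 2 + (a + 2) * ρ'' + 1 := by nlinarith [h.mul_rho''_add_one_pos]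
    nlinarith [hmul ρ'' (by simp)]

theorem two_le_traceForm (h : SimplestCubicRoots a ρ ρ' ρ'') {x y z : ℤ}
    (hδ : TotallyPositive ρ ρ' ρ'' (codiffVal a x y z)) : 2 ≤ traceForm a 1 1 1 x y z := by
  have h₁ := h.traceForm_pos (b₀ := 1) (b₁ := 0) (b₂ := 0) (fun r _ => by simp [quadVal]) hδ
  have h₂ := h.traceForm_pos (b₀ := 0) (b₁ := 0) (b₂ := 1)
    (fun r hr => by simpa [quadVal] using pow_two_pos_of_ne_zero (h.ne_zero_of_mem hr)) hδ
  have h₃ := h.traceForm_pos (b₀ := 1) (b₁ := 2) (b₂ := 1) (fun r hr => by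
    have := pow_two_pos_of_ne_zero (a := 1 + r) fun h0 => h.ne_neg_one_of_mem hr (by linarith)
    simp only [quadVal]; push_cast; linarith) hδ
  have : 2 * traceForm a 1 1 1 x y z
      = traceForm a 1 0 0 x y z + traceForm a 0 0 1 x y z + traceForm a 1 2 1 x y z := by
    simp only [traceForm]; ring
  omega

theorem not_exists_decomposition (h : SimplestCubicRoots a ρ ρ' ρ'') :
    ¬ ∃ b₀ b₁ b₂ c₀ c₁ c₂ : ℤ, TotallyPositive ρ ρ' ρ'' (quadVal b₀ b₁ b₂) ∧
      TotallyPositive ρ ρ' ρ'' (quadVal c₀ c₁ c₂) ∧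
      1 + ρ + ρ ^ 2 = quadVal b₀ b₁ b₂ ρ + quadVal c₀ c₁ c₂ ρ := by
  rintro ⟨b₀, b₁, b₂, c₀, c₁, c₂, hβ, hγ, hsum⟩
  obtain ⟨h₀, h₁, h₂⟩ := eq_zero_of_simplestCubic_root (h.root ρ (by simp))
    (q₀ := b₀ + c₀ - 1) (q₁ := b₁ + c₁ - 1) (q₂ := b₂ + c₂ - 1)
    (by simp only [quadVal] at hsum; push_cast; linear_combination -hsum)
  have tβ₁ := h.traceForm_pos hβ h.totallyPositive_δ₁
  have tγ₁ := h.traceForm_pos hγ h.totallyPositive_δ₁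
  have tβ₂ := h.traceForm_pos hβ h.totallyPositive_δ₂
  have tγ₂ := h.traceForm_pos hγ h.totallyPositive_δ₂
  simp only [traceForm_δ₁, traceForm_δ₂] at tβ₁ tγ₁ tβ₂ tγ₂
  obtain ⟨hb₀, hb₁, hc₀, hc₁, hc₂⟩ :
      b₀ = 1 - b₂ ∧ b₁ = b₂ ∧ c₀ = b₂ ∧ c₁ = 1 - b₂ ∧ c₂ = 1 - b₂ := by omega
  have hβ'' := (totallyPositive_iff.1 hβ).2.2
  have hγ'' := (totallyPositive_iff.1 hγ).2.2
  rw [hb₀, hb₁] at hβ''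
  rw [hc₀, hc₁, hc₂] at hγ''
  simp only [quadVal] at hβ'' hγ''
  push_cast at hβ'' hγ''
  have hw : ρ'' + ρ'' ^ 2 < 0 := by nlinarith [h.neg_one_lt_rho'', h.rho''_neg]
  rcases le_or_gt b₂ 0 with hm | hm
  · have : (b₂ : ℝ) ≤ 0 := by exact_mod_cast hm
    nlinarith
  · have : (1 : ℝ) ≤ b₂ := by exact_mod_cast hm
    nlinarith

end SimplestCubicRoots

theorem simplest_cubic_exceptional_element (a : ℤ) (ha : 0 ≤ a) (ρ ρ' ρ'' : ℝ)
    (hρ : ρ^3 - a*ρ^2 - (a+3)*ρ - 1 = 0)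
    (hρ' : ρ'^3 - a*ρ'^2 - (a+3)*ρ' - 1 = 0)
    (hρ'' : ρ''^3 - a*ρ''^2 - (a+3)*ρ'' - 1 = 0)
    (hb1 : (a:ℝ) + 1 < ρ) (hb2 : -2 < ρ' ∧ ρ' < -1) (hb3 : -1 < ρ'' ∧ ρ'' < 0) :
    -- elements of the codifferent O_K^∨ = (1/f'(ρ))·ℤ[ρ] and their conjugates:
    let δ : ℤ → ℤ → ℤ → ℝ → ℝ := fun x y z r =>
      ((x:ℝ) + y*r + z*r^2) / (3*r^2 - 2*a*r - (a+3))
    -- the trace Tr((1+ρ+ρ²)·δ):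
    let T : ℤ → ℤ → ℤ → ℝ := fun x y z =>
      δ x y z ρ * (1 + ρ + ρ^2) + δ x y z ρ' * (1 + ρ' + ρ'^2)
        + δ x y z ρ'' * (1 + ρ'' + ρ''^2)
    -- 1+ρ+ρ² is totally positive
    (∀ r ∈ ({ρ, ρ', ρ''} : Set ℝ), 0 < 1 + r + r^2) ∧
    -- 1+ρ+ρ² is indecomposable in O_K = ℤ[ρ]
    (¬ ∃ b₀ b₁ b₂ c₀ c₁ c₂ : ℤ,
      (∀ r ∈ ({ρ, ρ', ρ''} : Set ℝ), 0 < (b₀:ℝ) + b₁*r + b₂*r^2) ∧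
      (∀ r ∈ ({ρ, ρ', ρ''} : Set ℝ), 0 < (c₀:ℝ) + c₁*r + c₂*r^2) ∧
      (1 + ρ + ρ^2 = ((b₀:ℝ) + b₁*ρ + b₂*ρ^2) + ((c₀:ℝ) + c₁*ρ + c₂*ρ^2))) ∧
    -- the minimum of Tr((1+ρ+ρ²)δ) over totally positive δ ∈ O_K^∨ equals 2
    (∃ x y z : ℤ, (∀ r ∈ ({ρ, ρ', ρ''} : Set ℝ), 0 < δ x y z r) ∧ T x y z = 2) ∧
    (∀ x y z : ℤ, (∀ r ∈ ({ρ, ρ', ρ''} : Set ℝ), 0 < δ x y z r) → 2 ≤ T x y z) := by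
  intro δ T
  have h := SimplestCubicRoots.of_roots ha hρ hρ' hρ'' hb1 hb2.2 hb3
  have hT : ∀ x y z, T x y z = traceForm a 1 1 1 x y z := fun x y z => by
    rw [← h.trace_eq]
    simp only [T, δ, codiffVal, quadVal]
    push_cast
    ring
  refine ⟨fun r _ => by nlinarith [sq_nonneg (2 * r + 1)], h.not_exists_decomposition,
    ⟨-(a + 2), -a, 1, h.totallyPositive_δ₂, ?_⟩, fun x y z hδ => ?_⟩
  · rw [hT, traceForm_δ₂]
    norm_num
  · rw [hT]
    exact_mod_cast h.two_le_traceForm hδ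
end

section
/- Let K be a totally real number field of degree d with an order O, and suppose there exist δ ∈ O^∨ totally positive and n totally positive elements α_1, ..., α_n ∈ O, pairwise distinct, with Tr(δα_i) = 1 for all i. Then every classical universal quadratic form over O has rank at least n/d. -/
/-!
Write `Q(x) = xᵀ M x` and let `b(u, w) = Tr (δ · uᵀ M w)`. Because `M` has entries in `O` and
`δ ∈ O^∨`, `b` is integral on `O^r`, and since `δ` and `Q` are totally positive it is positive
definite there. Choosing `vᵢ ∈ O^r` with `Q(vᵢ) = αᵢ` gives `b(vᵢ, vᵢ) = 1`, and the `vᵢ` are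
distinct up to sign since the `αᵢ` are distinct. In a positive definite integral lattice such
vectors are orthogonal, hence `ℚ`-linearly independent in `K^r`, which has dimension `r d`.
-/

open NumberField Matrix

theorem NumberField.trace_pos_of_forall_ringHom_pos {K : Type*} [Field K] [NumberField K]
    (htotreal : ∀ v : InfinitePlace K, v.IsReal) {x : K} (hx : ∀ φ : K →+* ℝ, 0 < φ x) :
    0 < Algebra.trace ℚ K x := by
  have hre : ((Algebra.trace ℚ K x : ℚ) : ℝ) = ∑ σ : K →ₐ[ℚ] ℂ, (σ x).re := by
    simpa using congrArg Complex.re (trace_eq_sum_embeddings (K := ℚ) (E := ℂ) (x := x))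
  have hpos (σ : K →ₐ[ℚ] ℂ) : 0 < (σ x).re := by
    have hσ : ComplexEmbedding.IsReal (σ : K →+* ℂ) :=
      InfinitePlace.isReal_of_mk_isReal (htotreal _)
    rw [show σ x = hσ.embedding x from (hσ.coe_embedding_apply x).symm, Complex.ofReal_re]
    exact hx hσ.embedding
  have : Nonempty (K →ₐ[ℚ] ℂ) := ⟨IsAlgClosed.lift⟩
  exact_mod_cast hre ▸ Finset.sum_pos (fun σ _ => hpos σ) Finset.univ_nonempty

namespace LinearMap.BilinForm

variable {R V : Type*} [Field R] [LinearOrder R] [IsStrictOrderedRing R]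
  [AddCommGroup V] [Module R V] {b : LinearMap.BilinForm R V} {L : AddSubgroup V}

/-- `b (x ∓ y) (x ∓ y) = 2 ∓ 2 b x y` is positive, so the integer `b x y` lies strictly between
`-1` and `1`. -/
theorem apply_eq_zero_of_apply_self_eq_one (hb : b.IsSymm)
    (hint : ∀ x ∈ L, ∀ y ∈ L, ∃ t : ℤ, b x y = t) (hpos : ∀ x ∈ L, x ≠ 0 → 0 < b x x)
    {x y : V} (hx : x ∈ L) (hy : y ∈ L) (hxx : b x x = 1) (hyy : b y y = 1)
    (hxy : x ≠ y) (hxy' : x ≠ -y) : b x y = 0 := by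
  obtain ⟨t, ht⟩ := hint x hx y hy
  have hsub : b (x - y) (x - y) = 2 - 2 * t := by
    simp only [sub_left, sub_right, hxx, hyy, hb.eq y x, ht]; ring
  have hadd : b (x + y) (x + y) = 2 + 2 * t := by
    simp only [add_left, add_right, hxx, hyy, hb.eq y x, ht]; ring
  have h₁ := hpos _ (L.sub_mem hx hy) (sub_ne_zero.mpr hxy)
  have h₂ := hpos _ (L.add_mem hx hy) (fun h => hxy' (eq_neg_of_add_eq_zero_left h))
  rw [hsub] at h₁
  rw [hadd] at h₂
  have ht₁ : t < 1 := by exact_mod_cast (by linarith : (t : R) < 1)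
  have ht₂ : -1 < t := by exact_mod_cast (by linarith : (-1 : R) < t)
  rw [ht, show t = 0 by omega, Int.cast_zero]

theorem linearIndependent_of_apply_self_eq_one (hb : b.IsSymm)
    (hint : ∀ x ∈ L, ∀ y ∈ L, ∃ t : ℤ, b x y = t) (hpos : ∀ x ∈ L, x ≠ 0 → 0 < b x x)
    {ι : Type*} {v : ι → V} (hvL : ∀ i, v i ∈ L) (hv : ∀ i, b (v i) (v i) = 1)
    (hvne : Pairwise fun i j => v i ≠ v j ∧ v i ≠ -v j) : LinearIndependent R v :=
  linearIndependent_of_iIsOrtho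
    (fun i j hij => apply_eq_zero_of_apply_self_eq_one hb hint hpos (hvL i) (hvL j) (hv i) (hv j)
      (hvne hij).1 (hvne hij).2)
    (fun i => by simp [hv])

end LinearMap.BilinForm

namespace Matrix

variable {R ι : Type*} [CommRing R] [Fintype ι] {M : Matrix ι ι R}

theorem sum_sum_mul_eq_dotProduct_mulVec (M : Matrix ι ι R) (v w : ι → R) :
    ∑ i, ∑ j, M i j * v i * w j = v ⬝ᵥ M *ᵥ w := by
  rw [dot_mulVec_eq_sum_sum, Finset.sum_comm]
  simp only [mul_comm (M _ _)]

theorem IsSymm.dotProduct_mulVec_comm (hM : M.IsSymm) (v w : ι → R) :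
    v ⬝ᵥ M *ᵥ w = w ⬝ᵥ M *ᵥ v := by
  rw [dotProduct_mulVec, ← mulVec_transpose, hM.eq, dotProduct_comm]

theorem dotProduct_mulVec_mem {S : Subring R} (hM : ∀ i j, M i j ∈ S) {v w : ι → R}
    (hv : ∀ i, v i ∈ S) (hw : ∀ i, w i ∈ S) : v ⬝ᵥ M *ᵥ w ∈ S :=
  S.sum_mem fun i _ => S.mul_mem (hv i) (S.sum_mem fun j _ => S.mul_mem (hM i j) (hw j))

end Matrix

section

variable {K ι : Type*} [Field K] [CharZero K] [Fintype ι]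

noncomputable def traceMatrixForm (δ : K) (M : Matrix ι ι K) :
    LinearMap.BilinForm ℚ (ι → K) :=
  LinearMap.mk₂ ℚ (fun u w => Algebra.trace ℚ K (δ * (u ⬝ᵥ M *ᵥ w)))
    (fun u u' w => by simp [add_dotProduct, mul_add])
    (fun c u w => by simp [smul_dotProduct])
    (fun u w w' => by simp [mulVec_add, mul_add])
    (fun c u w => by simp [mulVec_smul])

@[simp]
theorem traceMatrixForm_apply (δ : K) (M : Matrix ι ι K) (u w : ι → K) :
    traceMatrixForm δ M u w = Algebra.trace ℚ K (δ * (u ⬝ᵥ M *ᵥ w)) := rfl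

theorem isSymm_traceMatrixForm (δ : K) {M : Matrix ι ι K} (hM : M.IsSymm) :
    (traceMatrixForm δ M).IsSymm :=
  ⟨fun u w => by simp only [traceMatrixForm_apply, hM.dotProduct_mulVec_comm u w]⟩

end

open NumberField Matrix in
theorem classical_universal_rank_lower_bound_general (K : Type*) [Field K] [NumberField K]
    (htotreal : ∀ v : InfinitePlace K, v.IsReal)
    -- O is an order in K
    (O : Subring K)
    -- δ is a totally positive element of the codifferent of O
    (δ : K) (hδpos : ∀ φ : K →+* ℝ, 0 < φ δ)
    (hδcod : ∀ β ∈ O, ∃ t : ℤ, Algebra.trace ℚ K (δ * β) = t)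
    -- n pairwise distinct totally positive elements of O of trace one
    (n : ℕ) (α : Fin n → K) (hαinj : Function.Injective α)
    (hαO : ∀ i, α i ∈ O) (hαpos : ∀ i, ∀ φ : K →+* ℝ, 0 < φ (α i))
    (hαtr : ∀ i, Algebra.trace ℚ K (δ * α i) = 1)
    -- Q is a classical totally positive universal quadratic form of rank r over O,
    -- given by its symmetric Gram matrix M with entries in O
    (r : ℕ) (M : Matrix (Fin r) (Fin r) K)
    (hMsym : M.IsSymm) (hMO : ∀ i j, M i j ∈ O)
    (hQpos : ∀ v : Fin r → K, (∀ i, v i ∈ O) → v ≠ 0 →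
      ∀ φ : K →+* ℝ, 0 < φ (∑ i, ∑ j, M i j * v i * v j))
    (hQuniv : ∀ x ∈ O, (∀ φ : K →+* ℝ, 0 < φ x) →
      ∃ v : Fin r → K, (∀ i, v i ∈ O) ∧ ∑ i, ∑ j, M i j * v i * v j = x) :
    n ≤ r * Module.finrank ℚ K := by
  simp only [sum_sum_mul_eq_dotProduct_mulVec] at hQpos hQuniv
  choose v hvO hvQ using fun i => hQuniv (α i) (hαO i) (hαpos i)
  let L := AddSubgroup.pi Set.univ fun _ : Fin r => O.toAddSubgroup
  have hL {u : Fin r → K} : u ∈ L ↔ ∀ i, u i ∈ O := by simp [L, AddSubgroup.mem_pi]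
  have hint : ∀ u ∈ L, ∀ w ∈ L, ∃ t : ℤ, traceMatrixForm δ M u w = t := fun u hu w hw =>
    hδcod _ (dotProduct_mulVec_mem hMO (hL.1 hu) (hL.1 hw))
  have hpos : ∀ u ∈ L, u ≠ 0 → 0 < traceMatrixForm δ M u u := fun u hu hu0 =>
    trace_pos_of_forall_ringHom_pos htotreal fun φ => by
      simpa only [map_mul] using mul_pos (hδpos φ) (hQpos u (hL.1 hu) hu0 φ)
  have hv : ∀ i, traceMatrixForm δ M (v i) (v i) = 1 := fun i => by
    simp only [traceMatrixForm_apply, hvQ, hαtr]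
  have hvne : Pairwise fun i j => v i ≠ v j ∧ v i ≠ -v j := fun i j hij =>
    ⟨fun h => hαinj.ne hij (by rw [← hvQ i, ← hvQ j, h]),
     fun h => hαinj.ne hij (by rw [← hvQ i, ← hvQ j, h, neg_dotProduct, mulVec_neg,
       dotProduct_neg, neg_neg])⟩
  have hli := (LinearMap.BilinForm.linearIndependent_of_apply_self_eq_one
    (isSymm_traceMatrixForm δ hMsym) hint hpos (fun i => hL.2 (hvO i)) hv hvne)
  simpa [Module.finrank_pi_fintype] using hli.fintype_card_le_finrank

open NumberField in
theorem classical_universal_rank_lower_bound (K : Type*) [Field K] [NumberField K]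
    (htotreal : ∀ v : InfinitePlace K, v.IsReal)
    -- O is an order in K
    (O : Subring K) (hOint : ∀ x ∈ O, IsIntegral ℤ x)
    (hOfull : ∀ x : K, ∃ m : ℤ, m ≠ 0 ∧ (m : K) * x ∈ O)
    -- δ is a totally positive element of the codifferent of O
    (δ : K) (hδpos : ∀ φ : K →+* ℝ, 0 < φ δ)
    (hδcod : ∀ β ∈ O, ∃ t : ℤ, Algebra.trace ℚ K (δ * β) = t)
    -- n pairwise distinct totally positive elements of O of trace one
    (n : ℕ) (α : Fin n → K) (hαinj : Function.Injective α)
    (hαO : ∀ i, α i ∈ O) (hαpos : ∀ i, ∀ φ : K →+* ℝ, 0 < φ (α i))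
    (hαtr : ∀ i, Algebra.trace ℚ K (δ * α i) = 1)
    -- Q is a classical totally positive universal quadratic form of rank r over O,
    -- given by its symmetric Gram matrix M with entries in O
    (r : ℕ) (M : Matrix (Fin r) (Fin r) K)
    (hMsym : M.IsSymm) (hMO : ∀ i j, M i j ∈ O)
    (hQpos : ∀ v : Fin r → K, (∀ i, v i ∈ O) → v ≠ 0 →
      ∀ φ : K →+* ℝ, 0 < φ (∑ i, ∑ j, M i j * v i * v j))
    (hQuniv : ∀ x ∈ O, (∀ φ : K →+* ℝ, 0 < φ x) →
      ∃ v : Fin r → K, (∀ i, v i ∈ O) ∧ ∑ i, ∑ j, M i j * v i * v j = x) :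
    n ≤ r * Module.finrank ℚ K :=
  classical_universal_rank_lower_bound_general K htotreal O δ hδpos hδcod n α hαinj hαO hαpos hαtr r
    M hMsym hMO hQpos hQuniv
end

section
/- Let K = Q(√D) with D > 1 squarefree, and let α ∈ O_K be totally positive and indecomposable. Then there exists a totally positive element δ of the codifferent O_K^∨ with Tr(αδ) = 1. -/
/-!
Embed `K` in `ℝ²` by its two real embeddings `σ, σ'`, so that `Tr(xy)` becomes the dot product.
Write `α = a ω₀ + b ω₁` in an integral basis. Indecomposability forces `gcd(a, b) = 1`
(otherwise `α = gε = ε + (g - 1)ε`), so the elements of the codifferent with `Tr(αδ) = 1` form a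
progression `δₜ = δ₀ + tγ`, `Tr(αγ) = 0`, on the line `Tr(α ·) = 1`. That line meets the open
positive quadrant in a segment. If no `δₜ` lies in it, two consecutive terms `u = δ_N`,
`v = δ_{N+1}` lie on opposite sides of it, with `σ u < 0 < σ' u` and `σ' v < 0 < σ v`. Now `u, v`
is a `ℤ`-basis of the codifferent; the dual basis `B, G` of `𝓞 K` satisfies `α = B + G`, and
Cramer's rule shows that `B` and `G` are totally positive, contradicting indecomposability.
-/

open NumberField Module

section RealEmbeddings

variable {K : Type*} [Field K] [IsTotallyReal K]

variable (K) in
noncomputable def realEmbeddingsEquiv : (K →+* ℝ) ≃ (K →+* ℂ) :=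
  Equiv.ofBijective (Complex.ofRealHom.comp ·)
    ⟨fun _ _ h => RingHom.ext fun x => Complex.ofReal_injective (RingHom.congr_fun h x),
      fun φ => ⟨(IsTotallyReal.complexEmbedding_isReal φ).embedding,
        RingHom.ext (IsTotallyReal.complexEmbedding_isReal φ).coe_embedding_apply⟩⟩

theorem card_realEmbeddings [NumberField K] : Fintype.card (K →+* ℝ) = finrank ℚ K := by
  rw [Fintype.card_congr (realEmbeddingsEquiv K), Embeddings.card]

theorem trace_eq_sum_realEmbeddings [NumberField K] (x : K) :
    ((Algebra.trace ℚ K x : ℚ) : ℝ) = ∑ σ : K →+* ℝ, σ x := by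
  apply Complex.ofReal_injective
  rw [Complex.ofReal_ratCast, ← eq_ratCast (algebraMap ℚ ℂ), trace_eq_sum_embeddings ℂ,
    ← (RingHom.equivRatAlgHom K ℂ).sum_comp, ← (realEmbeddingsEquiv K).sum_comp,
    Complex.ofReal_sum]
  rfl

theorem exists_pair_realEmbeddings_of_finrank_eq_two [NumberField K] (hdeg : finrank ℚ K = 2) :
    ∃ σ σ' : K →+* ℝ, (∀ φ, φ = σ ∨ φ = σ') ∧
      ∀ x, ((Algebra.trace ℚ K x : ℚ) : ℝ) = σ x + σ' x := by
  classical
  obtain ⟨σ, σ', hne, huniv⟩ :=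
    Finset.card_eq_two.mp (show (Finset.univ : Finset (K →+* ℝ)).card = 2 by
      rw [Finset.card_univ, card_realEmbeddings, hdeg])
  refine ⟨σ, σ', fun φ => by simpa [huniv] using Finset.mem_univ φ, fun x => ?_⟩
  rw [trace_eq_sum_realEmbeddings, huniv, Finset.sum_pair hne]

end RealEmbeddings

section Decomposable

variable {K : Type*} [CommRing K]

def IsTotallyPositive (x : K) : Prop := ∀ φ : K →+* ℝ, 0 < φ x

def IsDecomposable (α : K) : Prop :=
  ∃ β γ : K, IsIntegral ℤ β ∧ IsIntegral ℤ γ ∧ IsTotallyPositive β ∧ IsTotallyPositive γ ∧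
    α = β + γ

theorem isTotallyPositive_iff_of_forall_eq_or_eq {σ σ' : K →+* ℝ} (hσ : ∀ φ, φ = σ ∨ φ = σ')
    {x : K} : IsTotallyPositive x ↔ 0 < σ x ∧ 0 < σ' x :=
  ⟨fun h => ⟨h σ, h σ'⟩, fun h φ => by rcases hσ φ with rfl | rfl <;> simp [h]⟩

theorem isDecomposable_of_eq_nsmul {α ε : K} {n : ℕ} (hn : 2 ≤ n) (hε : IsIntegral ℤ ε)
    (hα : IsTotallyPositive α) (h : α = n • ε) : IsDecomposable α := by
  obtain ⟨m, rfl⟩ := Nat.exists_eq_add_of_le' hn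
  have hεpos : IsTotallyPositive ε := fun φ => by
    have := hα φ
    rw [h, map_nsmul, nsmul_eq_mul] at this
    exact pos_of_mul_pos_right this (by positivity)
  refine ⟨ε, (m + 1) • ε, hε, hε.nsmul _, hεpos, fun φ => ?_, by rw [h]; module⟩
  rw [map_nsmul, nsmul_eq_mul]
  exact mul_pos (by positivity) (hεpos φ)

end Decomposable

/-- Cramer's rule for `u ⬝ x = 1`, `v ⬝ x = 0`; the sign of the determinant comes from `a`. -/
theorem pos_and_pos_of_dual_pairings {u₁ u₂ v₁ v₂ a₁ a₂ x₁ x₂ : ℝ} (hu₂ : 0 < u₂) (hv₁ : 0 < v₁)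
    (hv₂ : v₂ < 0) (ha₁ : 0 < a₁) (hua : u₁ * a₁ + u₂ * a₂ = 1) (hva : v₁ * a₁ + v₂ * a₂ = 1)
    (hux : u₁ * x₁ + u₂ * x₂ = 1) (hvx : v₁ * x₁ + v₂ * x₂ = 0) : 0 < x₁ ∧ 0 < x₂ := by
  have hdet : (u₁ * v₂ - u₂ * v₁) * a₁ = v₂ - u₂ := by linear_combination v₂ * hua - u₂ * hva
  have hneg : u₁ * v₂ - u₂ * v₁ < 0 := by nlinarith
  have hx₁ : x₁ * (u₁ * v₂ - u₂ * v₁) = v₂ := by linear_combination v₂ * hux - u₂ * hvx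
  have hx₂ : x₂ * (u₁ * v₂ - u₂ * v₁) = -v₁ := by linear_combination u₁ * hvx - v₁ * hux
  constructor <;> nlinarith

section TraceDual

variable {K : Type*} [Field K] [NumberField K]

theorem exists_basis_isIntegral_iff (hdeg : finrank ℚ K = 2) :
    ∃ ω : Basis (Fin 2) ℚ K, ∀ x : K, IsIntegral ℤ x ↔ ∃ a b : ℤ, x = a • ω 0 + b • ω 1 := by
  have hcard : Fintype.card (Free.ChooseBasisIndex ℤ (𝓞 K)) = 2 := by
    rw [← finrank_eq_card_chooseBasisIndex, RingOfIntegers.rank, hdeg]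
  set e := Fintype.equivFinOfCardEq hcard
  refine ⟨(integralBasis K).reindex e, fun x => ?_⟩
  have : IsIntegral ℤ x ↔ x ∈ (algebraMap (𝓞 K) K).range :=
    ⟨fun hx => ⟨⟨x, hx⟩, rfl⟩, by rintro ⟨y, rfl⟩; exact RingOfIntegers.isIntegral_coe y⟩
  rw [this, ← mem_span_integralBasis, ← Basis.range_reindex _ e,
    Submodule.mem_span_range_iff_exists_fun]
  simp [Fin.exists_fin_succ_pi, Fin.sum_univ_two, eq_comm]

theorem Module.Basis.trace_traceDual_mul_fin_two (ω : Basis (Fin 2) ℚ K) (p q a b : ℤ) :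
    Algebra.trace ℚ K ((p • ω.traceDual 0 + q • ω.traceDual 1) * (a • ω 0 + b • ω 1)) =
      (p * a + q * b : ℤ) := by
  simp only [add_mul, mul_add, smul_mul_smul_comm, map_add, map_zsmul, Basis.trace_traceDual_mul]
  simp

variable {ω : Basis (Fin 2) ℚ K}

theorem exists_int_trace_traceDual_mul
    (hω : ∀ x : K, IsIntegral ℤ x ↔ ∃ a b : ℤ, x = a • ω 0 + b • ω 1) (p q : ℤ) {β : K}
    (hβ : IsIntegral ℤ β) :
    ∃ t : ℤ, Algebra.trace ℚ K ((p • ω.traceDual 0 + q • ω.traceDual 1) * β) = t := by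
  obtain ⟨a, b, rfl⟩ := (hω β).1 hβ
  exact ⟨_, ω.trace_traceDual_mul_fin_two p q a b⟩

theorem isCoprime_of_not_isDecomposable
    (hω : ∀ x : K, IsIntegral ℤ x ↔ ∃ a b : ℤ, x = a • ω 0 + b • ω 1) {a b : ℤ}
    (hα : IsTotallyPositive (a • ω 0 + b • ω 1)) (hα0 : a • ω 0 + b • ω 1 ≠ 0)
    (hind : ¬ IsDecomposable (a • ω 0 + b • ω 1)) : IsCoprime a b := by
  rw [Int.isCoprime_iff_gcd_eq_one]
  by_contra hg1
  obtain ⟨a', ha⟩ := Int.gcd_dvd_left a b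
  obtain ⟨b', hb⟩ := Int.gcd_dvd_right a b
  generalize Int.gcd a b = g at ha hb hg1
  subst ha hb
  have hg0 : g ≠ 0 := by rintro rfl; simp at hα0
  refine hind (isDecomposable_of_eq_nsmul (n := g) (by omega) ((hω _).2 ⟨a', b', rfl⟩) hα ?_)
  module

variable {σ σ' : K →+* ℝ}

theorem map_mul_add_map_mul_of_traceDual (ω : Basis (Fin 2) ℚ K)
    (htr : ∀ x : K, ((Algebra.trace ℚ K x : ℚ) : ℝ) = σ x + σ' x) {p q a b n : ℤ}
    (h : p * a + q * b = n) :
    σ (p • ω.traceDual 0 + q • ω.traceDual 1) * σ (a • ω 0 + b • ω 1) +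
      σ' (p • ω.traceDual 0 + q • ω.traceDual 1) * σ' (a • ω 0 + b • ω 1) = n := by
  have := htr ((p • ω.traceDual 0 + q • ω.traceDual 1) * (a • ω 0 + b • ω 1))
  rw [ω.trace_traceDual_mul_fin_two, h, map_mul, map_mul] at this
  exact_mod_cast this.symm

theorem isDecomposable_of_sign_change
    (hω : ∀ x : K, IsIntegral ℤ x ↔ ∃ a b : ℤ, x = a • ω 0 + b • ω 1)
    (hσ : ∀ φ, φ = σ ∨ φ = σ') (htr : ∀ x : K, ((Algebra.trace ℚ K x : ℚ) : ℝ) = σ x + σ' x)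
    {a b p q : ℤ} (hpq : p * a + q * b = 1) (hα : IsTotallyPositive (a • ω 0 + b • ω 1))
    (hu : σ (p • ω.traceDual 0 + q • ω.traceDual 1) < 0)
    (hu' : 0 < σ' (p • ω.traceDual 0 + q • ω.traceDual 1))
    (hv : 0 < σ ((p + b) • ω.traceDual 0 + (q - a) • ω.traceDual 1))
    (hv' : σ' ((p + b) • ω.traceDual 0 + (q - a) • ω.traceDual 1) < 0) :
    IsDecomposable (a • ω 0 + b • ω 1) := by
  have huα := map_mul_add_map_mul_of_traceDual ω htr hpq
  have hvα := map_mul_add_map_mul_of_traceDual ω htr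
    (by linear_combination hpq : (p + b) * a + (q - a) * b = 1)
  have huB := map_mul_add_map_mul_of_traceDual ω htr
    (by linear_combination hpq : p * (a - q) + q * (p + b) = 1)
  have hvB := map_mul_add_map_mul_of_traceDual ω htr
    (by ring : (p + b) * (a - q) + (q - a) * (p + b) = 0)
  have huG := map_mul_add_map_mul_of_traceDual ω htr (by ring : p * q + q * -p = 0)
  have hvG := map_mul_add_map_mul_of_traceDual ω htr
    (by linear_combination hpq : (p + b) * q + (q - a) * -p = 1)
  push_cast at huα hvα huB hvB huG hvG
  -- `B, G` is the basis of `𝓞 K` dual to the basis `u = (p, q)`, `v = (p + b, q - a)` of the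
  -- codifferent.
  set v := (p + b) • ω.traceDual 0 + (q - a) • ω.traceDual 1
  set B := (a - q) • ω 0 + (p + b) • ω 1
  set G := q • ω 0 + (-p) • ω 1
  obtain ⟨hB, hB'⟩ := pos_and_pos_of_dual_pairings hu' hv hv' (hα σ) huα hvα huB hvB
  obtain ⟨hG', hG⟩ := pos_and_pos_of_dual_pairings (u₁ := σ' v) (a₂ := σ (a • ω 0 + b • ω 1))
    (x₁ := σ' G) (x₂ := σ G) hv hu' hu (hα σ')
    (by linarith) (by linarith) (by linarith) (by linarith)
  refine ⟨B, G, (hω B).2 ⟨_, _, rfl⟩, (hω G).2 ⟨_, _, rfl⟩,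
    (isTotallyPositive_iff_of_forall_eq_or_eq hσ).2 ⟨hB, hB'⟩,
    (isTotallyPositive_iff_of_forall_eq_or_eq hσ).2 ⟨hG, hG'⟩, by module⟩

theorem exists_isTotallyPositive_traceDual
    (hω : ∀ x : K, IsIntegral ℤ x ↔ ∃ a b : ℤ, x = a • ω 0 + b • ω 1)
    (hσ : ∀ φ, φ = σ ∨ φ = σ') (htr : ∀ x : K, ((Algebra.trace ℚ K x : ℚ) : ℝ) = σ x + σ' x)
    {a b p q : ℤ} (hpq : p * a + q * b = 1) (hα : IsTotallyPositive (a • ω 0 + b • ω 1))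
    (hind : ¬ IsDecomposable (a • ω 0 + b • ω 1)) :
    ∃ t : ℤ, IsTotallyPositive ((p + t * b) • ω.traceDual 0 + (q - t * a) • ω.traceDual 1) := by
  set γ := b • ω.traceDual 0 + (-a) • ω.traceDual 1 with hγ_def
  wlog hγ : 0 < σ γ generalizing σ σ' with H
  · have hγα := map_mul_add_map_mul_of_traceDual ω htr (by ring : b * a + -a * b = 0)
    have hγ_one := map_mul_add_map_mul_of_traceDual ω htr
      (by linear_combination hpq : b * q + -a * -p = 1)
    rw [← hγ_def] at hγα hγ_one
    have hσγ : σ γ ≠ 0 := fun h => by simp [(map_eq_zero σ).1 h] at hγ_one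
    push_cast at hγα
    -- `Tr(γα) = 0` with `α ≫ 0` forces `σ γ` and `σ' γ` to have opposite signs.
    exact H (fun φ => (hσ φ).symm) (fun x => (htr x).trans (add_comm _ _))
      (by nlinarith [hα σ, hα σ', lt_of_le_of_ne (not_lt.1 hγ) hσγ])
  by_contra hcon
  set δ : ℤ → K := fun t => (p + t * b) • ω.traceDual 0 + (q - t * a) • ω.traceDual 1
  have hδα (t : ℤ) :
      σ (δ t) * σ (a • ω 0 + b • ω 1) + σ' (δ t) * σ' (a • ω 0 + b • ω 1) = 1 := by
    exact_mod_cast map_mul_add_map_mul_of_traceDual ω htr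
      (by linear_combination hpq : (p + t * b) * a + (q - t * a) * b = 1)
  have hδ0 (t : ℤ) : δ t ≠ 0 := fun h => by simpa [h] using hδα t
  have hlin (t : ℤ) : σ (δ t) = σ (δ 0) + t * σ γ := by
    rw [← zsmul_eq_mul, ← map_zsmul, ← map_add]
    congr 1
    simp only [δ, γ]
    module
  obtain ⟨N, ⟨hN₁, hN₂⟩, -⟩ := existsUnique_add_zsmul_mem_Ioc hγ (σ (δ 0)) (-σ γ)
  rw [zsmul_eq_mul, ← hlin] at hN₁ hN₂
  have hu : σ (δ N) < 0 := lt_of_le_of_ne (by linarith) ((map_ne_zero σ).2 (hδ0 N))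
  have hu' : 0 < σ' (δ N) := by nlinarith [hδα N, hα σ, hα σ']
  have hv : 0 < σ (δ (N + 1)) := by rw [hlin] at hN₁ ⊢; push_cast; linarith
  have hv' : σ' (δ (N + 1)) < 0 := by
    have := mt (isTotallyPositive_iff_of_forall_eq_or_eq hσ).2 (not_exists.1 hcon (N + 1))
    exact lt_of_le_of_ne (not_lt.1 fun h => this ⟨hv, h⟩) ((map_ne_zero σ').2 (hδ0 _))
  have hδsucc :
      δ (N + 1) = (p + N * b + b) • ω.traceDual 0 + (q - N * a - a) • ω.traceDual 1 := by
    simp only [δ]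
    congr 2 <;> ring
  rw [hδsucc] at hv hv'
  exact hind (isDecomposable_of_sign_change hω hσ htr (by linear_combination hpq) hα hu hu' hv hv')

end TraceDual

open NumberField in
theorem quadratic_indecomposable_has_trace_one (K : Type*) [Field K] [NumberField K]
    (hdeg : Module.finrank ℚ K = 2)
    (htotreal : ∀ v : InfinitePlace K, v.IsReal)
    (α : K) (hαint : IsIntegral ℤ α) (hαpos : ∀ φ : K →+* ℝ, 0 < φ α)
    (hind : ¬ ∃ β γ : K, IsIntegral ℤ β ∧ IsIntegral ℤ γ ∧
      (∀ φ : K →+* ℝ, 0 < φ β) ∧ (∀ φ : K →+* ℝ, 0 < φ γ) ∧ α = β + γ) :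
    ∃ δ : K,
      (∀ β : K, IsIntegral ℤ β → ∃ t : ℤ, Algebra.trace ℚ K (δ * β) = t) ∧
      (∀ φ : K →+* ℝ, 0 < φ δ) ∧
      Algebra.trace ℚ K (α * δ) = 1 := by
  have : IsTotallyReal K := ⟨htotreal⟩
  obtain ⟨σ, σ', hσ, htr⟩ := exists_pair_realEmbeddings_of_finrank_eq_two hdeg
  obtain ⟨ω, hω⟩ := exists_basis_isIntegral_iff hdeg
  obtain ⟨a, b, rfl⟩ := (hω α).1 hαint
  obtain ⟨p, q, hpq⟩ :=
    isCoprime_of_not_isDecomposable hω hαpos (fun h => (hαpos σ).ne' (by rw [h, map_zero])) hind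
  obtain ⟨t, ht⟩ := exists_isTotallyPositive_traceDual hω hσ htr hpq hαpos hind
  refine ⟨_, fun β => exists_int_trace_traceDual_mul hω _ _, ht, ?_⟩
  rw [mul_comm, ω.trace_traceDual_mul_fin_two]
  exact_mod_cast (by linear_combination hpq : (p + t * b) * a + (q - t * a) * b = 1)
end

section
/- Let ρ be a root of x^3 + (a-1)x^2 - ax - 1 with integer a ≥ 3 (Ennola's cubic). Then ρ and ρ - 1 are units in Z[ρ], and ρ(ρ-1)^{-1} = 1 + aρ + ρ^2 in Q(ρ). -/
/-!
If `f(ρ) = ρ³ + (a-1)ρ² - aρ - 1 = 0`, the constant term of `f` being `-1` makes `ρ` a unit,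
and `f(x + 1) = x³ + (a + 2)x² + (a + 1)x - 1` with constant term `-1` makes `ρ - 1` a unit, with
inverse `aρ + ρ²`. Multiplying that inverse by `ρ` and reducing `ρ³` gives `1 + aρ + ρ²`.
-/

namespace Ennola

variable {R : Type*} {a ρ : R}

section CommRing

variable [CommRing R]

theorem mul_cofactor_eq_one (hρ : ρ ^ 3 + (a - 1) * ρ ^ 2 - a * ρ - 1 = 0) :
    ρ * (ρ ^ 2 + (a - 1) * ρ - a) = 1 := by
  linear_combination hρ

theorem sub_one_mul_eq_one (hρ : ρ ^ 3 + (a - 1) * ρ ^ 2 - a * ρ - 1 = 0) :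
    (ρ - 1) * (a * ρ + ρ ^ 2) = 1 := by
  linear_combination hρ

end CommRing

theorem mul_inv_sub_one [Field R] (hρ : ρ ^ 3 + (a - 1) * ρ ^ 2 - a * ρ - 1 = 0) :
    ρ * (ρ - 1)⁻¹ = 1 + a * ρ + ρ ^ 2 := by
  rw [← eq_inv_of_mul_eq_one_right (sub_one_mul_eq_one hρ)]
  linear_combination hρ

end Ennola

theorem ennola_units_general (a : ℤ) (ρ : ℝ)
    (hρ : ρ^3 + (a-1)*ρ^2 - a*ρ - 1 = 0) :
    -- ρ is a unit in ℤ[ρ]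
    (ρ * (ρ^2 + (a-1)*ρ - a) = 1) ∧
    -- ρ - 1 is a unit in ℤ[ρ]
    (∃ x y z : ℤ, (ρ - 1) * ((x:ℝ) + y*ρ + z*ρ^2) = 1) ∧
    -- ρ(ρ-1)⁻¹ = 1 + aρ + ρ²
    (ρ * (ρ - 1)⁻¹ = 1 + a*ρ + ρ^2) := by
  refine ⟨Ennola.mul_cofactor_eq_one hρ, ⟨0, a, 1, ?_⟩, Ennola.mul_inv_sub_one hρ⟩
  simpa using Ennola.sub_one_mul_eq_one hρ

theorem ennola_units (a : ℤ) (ha : 3 ≤ a) (ρ : ℝ)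
    (hρ : ρ^3 + (a-1)*ρ^2 - a*ρ - 1 = 0) :
    -- ρ is a unit in ℤ[ρ]
    (ρ * (ρ^2 + (a-1)*ρ - a) = 1) ∧
    -- ρ - 1 is a unit in ℤ[ρ]
    (∃ x y z : ℤ, (ρ - 1) * ((x:ℝ) + y*ρ + z*ρ^2) = 1) ∧
    -- ρ(ρ-1)⁻¹ = 1 + aρ + ρ²
    (ρ * (ρ - 1)⁻¹ = 1 + a*ρ + ρ^2) :=
  ennola_units_general a ρ hρ
end

section
/- Let ρ be a root of x^3 + (a-1)x^2 - ax - 1 with integer a ≥ 3, and let f'(ρ) = 3ρ^2 + 2(a-1)ρ - a. Then δ = (-(a-1) + (a-1)ρ + ρ^2)/f'(ρ) satisfies Tr(δ(v_1 + v_2ρ + v_3ρ^2)) = v_1 + v_3 for all v_1, v_2, v_3 ∈ Z; in particular Tr(δ(1 + wρ + ρ^2)) = 2 for every integer w. -/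
/-!
Write `f = x³ + (a-1)x² - ax - 1` with distinct roots `ρ, ρ', ρ''`, so that `f'(r) = (r - s)(r - t)`
at each root `r` with `s, t` the other two. Modulo `f`, the product
`(-(a-1) + (a-1)x + x²)(v₁ + v₂x + v₃x²)` reduces to a quadratic whose `x²`-coefficient is `v₁ + v₃`.
Euler's identity `∑ g(r) / ∏_{s ≠ r} (r - s) = (leading coefficient of g)` for `deg g ≤ 2` then
evaluates the trace.
-/

section Cubic

variable {K : Type*} [Field K] {p q c r s t : K}

theorem cubic_roots_vieta (hr : r ^ 3 + p * r ^ 2 + q * r + c = 0)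
    (hs : s ^ 3 + p * s ^ 2 + q * s + c = 0) (ht : t ^ 3 + p * t ^ 2 + q * t + c = 0)
    (hrs : r ≠ s) (hrt : r ≠ t) (hst : s ≠ t) :
    r + s + t = -p ∧ r * s + r * t + s * t = q := by
  have hrs' : r ^ 2 + r * s + s ^ 2 + p * (r + s) + q = 0 :=
    (mul_eq_zero.mp (by linear_combination hr - hs : (r - s) * _ = 0)).resolve_left
      (sub_ne_zero.mpr hrs)
  have hrt' : r ^ 2 + r * t + t ^ 2 + p * (r + t) + q = 0 :=
    (mul_eq_zero.mp (by linear_combination hr - ht : (r - t) * _ = 0)).resolve_left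
      (sub_ne_zero.mpr hrt)
  have hsum : r + s + t + p = 0 :=
    (mul_eq_zero.mp (by linear_combination hrs' - hrt' : (s - t) * _ = 0)).resolve_left
      (sub_ne_zero.mpr hst)
  exact ⟨by linear_combination hsum, by linear_combination (r + s) * hsum - hrs'⟩

theorem cubic_deriv_eq_mul_sub (hr : r ^ 3 + p * r ^ 2 + q * r + c = 0)
    (hs : s ^ 3 + p * s ^ 2 + q * s + c = 0) (ht : t ^ 3 + p * t ^ 2 + q * t + c = 0)
    (hrs : r ≠ s) (hrt : r ≠ t) (hst : s ≠ t) :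
    3 * r ^ 2 + 2 * p * r + q = (r - s) * (r - t) := by
  obtain ⟨h₁, h₂⟩ := cubic_roots_vieta hr hs ht hrs hrt hst
  linear_combination (2 * r) * h₁ - h₂

end Cubic

theorem sum_quadratic_div_prod_sub {K : Type*} [Field K] {r s t : K}
    (hrs : r ≠ s) (hrt : r ≠ t) (hst : s ≠ t) (c₀ c₁ c₂ : K) :
    (c₂ * r ^ 2 + c₁ * r + c₀) / ((r - s) * (r - t))
      + (c₂ * s ^ 2 + c₁ * s + c₀) / ((s - r) * (s - t))
      + (c₂ * t ^ 2 + c₁ * t + c₀) / ((t - r) * (t - s)) = c₂ := by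
  have := sub_ne_zero.mpr hrs
  have := sub_ne_zero.mpr hrt
  have := sub_ne_zero.mpr hst
  have := sub_ne_zero.mpr hrs.symm
  have := sub_ne_zero.mpr hrt.symm
  have := sub_ne_zero.mpr hst.symm
  field_simp
  ring

theorem ennola_numerator_mul_eq {K : Type*} [Field K] {a x : K}
    (hx : x ^ 3 + (a - 1) * x ^ 2 + -a * x + -1 = 0) (v₁ v₂ v₃ : K) :
    (-a + 1 + (a - 1) * x + x ^ 2) * (v₁ + v₂ * x + v₃ * x ^ 2) =
      (v₁ + v₃) * x ^ 2 + ((a - 1) * v₁ + v₂ + v₃) * x + (v₂ - (a - 1) * v₁) := by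
  linear_combination (v₂ + v₃ * x) * hx

theorem ennola_codifferent_trace_general (a : ℤ) (ρ ρ' ρ'' : ℝ)
    (hρ : ρ^3 + (a-1)*ρ^2 - a*ρ - 1 = 0)
    (hρ' : ρ'^3 + (a-1)*ρ'^2 - a*ρ' - 1 = 0)
    (hρ'' : ρ''^3 + (a-1)*ρ''^2 - a*ρ'' - 1 = 0)
    (hne1 : ρ ≠ ρ') (hne2 : ρ ≠ ρ'') (hne3 : ρ' ≠ ρ'') :
    -- δ = (-(a-1) + (a-1)ρ + ρ²)/f'(ρ) with conjugates given by the other roots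
    let δ : ℝ → ℝ := fun r =>
      (-(a:ℝ) + 1 + (a-1)*r + r^2) / (3*r^2 + 2*(a-1)*r - a)
    -- Tr(δ(v₁ + v₂ρ + v₃ρ²)) = v₁ + v₃
    (∀ v₁ v₂ v₃ : ℤ,
      δ ρ * ((v₁:ℝ) + v₂*ρ + v₃*ρ^2) + δ ρ' * ((v₁:ℝ) + v₂*ρ' + v₃*ρ'^2)
        + δ ρ'' * ((v₁:ℝ) + v₂*ρ'' + v₃*ρ''^2) = (v₁:ℝ) + v₃) ∧
    -- in particular Tr(δ(1 + wρ + ρ²)) = 2 for every integer w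
    (∀ w : ℤ,
      δ ρ * (1 + (w:ℝ)*ρ + ρ^2) + δ ρ' * (1 + (w:ℝ)*ρ' + ρ'^2)
        + δ ρ'' * (1 + (w:ℝ)*ρ'' + ρ''^2) = 2) := by
  intro δ
  have hr : ρ ^ 3 + (a - 1) * ρ ^ 2 + -a * ρ + -1 = 0 := by linear_combination hρ
  have hs : ρ' ^ 3 + (a - 1) * ρ' ^ 2 + -a * ρ' + -1 = 0 := by linear_combination hρ'
  have ht : ρ'' ^ 3 + (a - 1) * ρ'' ^ 2 + -a * ρ'' + -1 = 0 := by linear_combination hρ''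
  have trace (v₁ v₂ v₃ : ℤ) :
      δ ρ * ((v₁:ℝ) + v₂*ρ + v₃*ρ^2) + δ ρ' * ((v₁:ℝ) + v₂*ρ' + v₃*ρ'^2)
        + δ ρ'' * ((v₁:ℝ) + v₂*ρ'' + v₃*ρ''^2) = (v₁:ℝ) + v₃ := by
    have reduce {x y z : ℝ} (hx : x ^ 3 + (a - 1) * x ^ 2 + -a * x + -1 = 0)
        (hy : y ^ 3 + (a - 1) * y ^ 2 + -a * y + -1 = 0)
        (hz : z ^ 3 + (a - 1) * z ^ 2 + -a * z + -1 = 0) (hxy : x ≠ y) (hxz : x ≠ z)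
        (hyz : y ≠ z) : δ x * (v₁ + v₂ * x + v₃ * x ^ 2) =
          ((v₁ + v₃) * x ^ 2 + ((a - 1) * v₁ + v₂ + v₃) * x + (v₂ - (a - 1) * v₁))
            / ((x - y) * (x - z)) := by
      rw [← cubic_deriv_eq_mul_sub hx hy hz hxy hxz hyz, div_mul_eq_mul_div]
      exact congrArg (· / _) (ennola_numerator_mul_eq hx _ _ _)
    rw [reduce hr hs ht hne1 hne2 hne3, reduce hs hr ht hne1.symm hne3 hne2,
      reduce ht hr hs hne2.symm hne3.symm hne1]
    exact sum_quadratic_div_prod_sub hne1 hne2 hne3 _ _ _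
  refine ⟨trace, fun w => ?_⟩
  simpa [one_add_one_eq_two] using trace 1 w 1

theorem ennola_codifferent_trace (a : ℤ) (ha : 3 ≤ a) (ρ ρ' ρ'' : ℝ)
    (hρ : ρ^3 + (a-1)*ρ^2 - a*ρ - 1 = 0)
    (hρ' : ρ'^3 + (a-1)*ρ'^2 - a*ρ' - 1 = 0)
    (hρ'' : ρ''^3 + (a-1)*ρ''^2 - a*ρ'' - 1 = 0)
    (hne1 : ρ ≠ ρ') (hne2 : ρ ≠ ρ'') (hne3 : ρ' ≠ ρ'') :
    -- δ = (-(a-1) + (a-1)ρ + ρ²)/f'(ρ) with conjugates given by the other roots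
    let δ : ℝ → ℝ := fun r =>
      (-(a:ℝ) + 1 + (a-1)*r + r^2) / (3*r^2 + 2*(a-1)*r - a)
    -- Tr(δ(v₁ + v₂ρ + v₃ρ²)) = v₁ + v₃
    (∀ v₁ v₂ v₃ : ℤ,
      δ ρ * ((v₁:ℝ) + v₂*ρ + v₃*ρ^2) + δ ρ' * ((v₁:ℝ) + v₂*ρ' + v₃*ρ'^2)
        + δ ρ'' * ((v₁:ℝ) + v₂*ρ'' + v₃*ρ''^2) = (v₁:ℝ) + v₃) ∧
    -- in particular Tr(δ(1 + wρ + ρ²)) = 2 for every integer w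
    (∀ w : ℤ,
      δ ρ * (1 + (w:ℝ)*ρ + ρ^2) + δ ρ' * (1 + (w:ℝ)*ρ' + ρ'^2)
        + δ ρ'' * (1 + (w:ℝ)*ρ'' + ρ''^2) = 2) :=
  ennola_codifferent_trace_general a ρ ρ' ρ'' hρ hρ' hρ'' hne1 hne2 hne3
end
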